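/- arXiv:2202.00422 — 9 statements merged into one kernel-verified Lean document; each statement's English description precedes it below -/
import Mathlib

section
/- Let H : ℝ × ℂ^{n+1} → ℝ be continuously differentiable in the second variable, S¹-invariant in x and positively 2-homogeneous in x. If x : ℝ → ℂ^{n+1} is a differentiable 1-periodic curve satisfying ẋ(t) = i·(∇ₓH(t, x(t)) − 2πλ·x(t)) for all t, then for every c > 0, θ ∈ ℝ and k ∈ ℤ, the curve y(t) := c·e^{2πi(θ + kt)}·x(t) is a differentiable 1-periodic curve satisfying ẏ(t) = i·(∇ₓH(t, y(t)) − 2π(λ − k)·y(t)) for all t. -/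
noncomputable section

open Real

/-- `ℂ^{n+1}`, regarded as a real inner product space via the instance
`InnerProductSpace.complexToReal` (real part of the Hermitian product). -/
abbrev EucC (n : ℕ) := EuclideanSpace ℂ (Fin (n + 1))

lemma inner_csmul {n : ℕ} (a : ℂ) (u v : EucC n) :
    (inner ℝ u (a • v) : ℝ) = inner ℝ ((starRingEnd ℂ a) • u) v := by
  simp only [PiLp.inner_apply, PiLp.smul_apply, smul_eq_mul, Complex.inner, map_mul,
    RingHomCompTriple.comp_apply, Complex.conj_conj, RingHom.id_apply]
  congr 1; funext i; congr 1; ring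

lemma G_equiv {n : ℕ} (H : ℝ → EucC n → ℝ) (G : ℝ → EucC n → EucC n)
    (hgrad : ∀ t x, HasGradientAt (fun y => H t y) (G t x) x)
    (hinv : ∀ t (θ : ℝ) x, H t (Complex.exp ((θ : ℂ) * Complex.I) • x) = H t x)
    (hhom : ∀ t (r : ℝ), 0 ≤ r → ∀ x, H t (r • x) = r ^ 2 * H t x)
    (t : ℝ) (c α : ℝ) (hc : 0 < c) (x : EucC n) :
    G t (((c : ℂ) * Complex.exp ((α : ℂ) * Complex.I)) • x)
      = ((c : ℂ) * Complex.exp ((α : ℂ) * Complex.I)) • G t x := by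
  set a : ℂ := (c : ℂ) * Complex.exp ((α : ℂ) * Complex.I) with ha
  have hax : ∀ y : EucC n, a • y = c • (Complex.exp ((α : ℂ) * Complex.I) • y) := by
    intro y; rw [← smul_smul, Complex.coe_smul]
  have hHa : ∀ y, H t (a • y) = c ^ 2 * H t y := by
    intro y; rw [hax, hhom t c hc.le, hinv]
  set L : EucC n →L[ℝ] EucC n :=
    (a • (ContinuousLinearMap.id ℂ (EucC n))).restrictScalars ℝ with hLdef
  have hL : HasFDerivAt (fun y : EucC n => a • y) L x := L.hasFDerivAt
  have h1 : HasFDerivAt (fun y => H t (a • y))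
      ((InnerProductSpace.toDual ℝ (EucC n) (G t (a • x)) : EucC n →L[ℝ] ℝ).comp L) x :=
    ((hgrad t (a • x)).hasFDerivAt).comp x hL
  have h2 : HasFDerivAt (fun y => c ^ 2 * H t y)
      ((c ^ 2 : ℝ) • (InnerProductSpace.toDual ℝ (EucC n) (G t x) : EucC n →L[ℝ] ℝ)) x :=
    ((hgrad t x).hasFDerivAt).const_mul (c ^ 2)
  have h1' : HasFDerivAt (fun y => c ^ 2 * H t y)
      ((InnerProductSpace.toDual ℝ (EucC n) (G t (a • x)) : EucC n →L[ℝ] ℝ).comp L) x := by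
    have : (fun y => H t (a • y)) = fun y => c ^ 2 * H t y := funext hHa
    rwa [this] at h1
  have hD := h1'.unique h2
  have hv : ∀ v : EucC n,
      (inner ℝ (G t (a • x)) (a • v) : ℝ) = c ^ 2 * inner ℝ (G t x) v := by
    intro v
    have := ContinuousLinearMap.ext_iff.mp hD v
    simpa [InnerProductSpace.toDual_apply_apply, hLdef] using this
  have key : (starRingEnd ℂ a) • G t (a • x) = (c ^ 2 : ℝ) • G t x := by
    apply ext_inner_right ℝ
    intro v
    rw [← inner_csmul, hv v, real_inner_smul_left]
  have habs : a * starRingEnd ℂ a = ((c ^ 2 : ℝ) : ℂ) := by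
    rw [Complex.mul_conj, ha]
    norm_cast
    simp [Complex.normSq_mul, Complex.normSq_ofReal, Complex.normSq_eq_norm_sq,
      Complex.norm_exp_ofReal_mul_I, sq]
  have h3 : a • ((starRingEnd ℂ a) • G t (a • x)) = a • ((c ^ 2 : ℝ) • G t x) := by
    rw [key]
  rw [smul_smul, habs, smul_comm] at h3
  have hc2 : (c ^ 2 : ℝ) ≠ 0 := by positivity
  have h4 : ((c ^ 2 : ℝ) : ℂ) • G t (a • x) = ((c ^ 2 : ℝ) : ℂ) • (a • G t x) := by
    rw [h3]; norm_cast
  have := smul_right_injective (EucC n) (by exact_mod_cast hc2 : ((c ^ 2 : ℝ) : ℂ) ≠ 0) h4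
  exact this

/-- Every solution of the `λ`-twisted Hamiltonian equation generates a `ℂ × ℤ`-family of
solutions: for `c > 0`, `θ ∈ ℝ` and `k ∈ ℤ`, the curve `y(t) = c e^{2πi(θ + kt)} x(t)`
solves the `(λ - k)`-twisted equation. -/
theorem twisted_solution_family (n : ℕ)
    (H : ℝ → EucC n → ℝ) (G : ℝ → EucC n → EucC n)
    -- `H` is continuously differentiable in the second variable, with gradient `G`
    (hgrad : ∀ t x, HasGradientAt (fun y => H t y) (G t x) x)
    (hGcont : ∀ t, Continuous fun x => G t x)
    -- `H` is `S¹`-invariant in `x`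
    (hinv : ∀ t (θ : ℝ) x, H t (Complex.exp ((θ : ℂ) * Complex.I) • x) = H t x)
    -- `H` is positively 2-homogeneous in `x`
    (hhom : ∀ t (r : ℝ), 0 ≤ r → ∀ x, H t (r • x) = r ^ 2 * H t x)
    (lam : ℝ) (x : ℝ → EucC n)
    (hx : ∀ t, DifferentiableAt ℝ x t)
    (hxper : ∀ t, x (t + 1) = x t)
    (hxeq : ∀ t, deriv x t = Complex.I • (G t (x t) - ((2 * π * lam : ℝ)) • x t))
    (c : ℝ) (hc : 0 < c) (θ : ℝ) (k : ℤ)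
    (y : ℝ → EucC n)
    (hy : ∀ t, y t = c • (Complex.exp (((2 * π * (θ + k * t) : ℝ) : ℂ) * Complex.I) • x t)) :
    (∀ t, DifferentiableAt ℝ y t) ∧
    (∀ t, y (t + 1) = y t) ∧
    (∀ t, deriv y t = Complex.I • (G t (y t) - ((2 * π * (lam - k) : ℝ)) • y t)) := by
  set A : ℝ → ℂ := fun t => (c : ℂ) * Complex.exp (((2 * π * (θ + k * t) : ℝ) : ℂ) * Complex.I)
    with hA
  clear_value A
  have hyA : ∀ t, y t = A t • x t := by
    intro t
    rw [hy t, hA, ← smul_smul, Complex.coe_smul]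
  have hAder : ∀ t, HasDerivAt A ((2 * π * k : ℂ) * Complex.I * A t) t := by
    intro t
    have h0 : HasDerivAt (fun s : ℝ => 2 * π * (θ + (k : ℝ) * s)) (2 * π * (k : ℝ)) t := by
      simpa using (((hasDerivAt_id t).const_mul (k : ℝ)).const_add θ).const_mul (2 * π)
    have h1 := (h0.ofReal_comp.mul_const Complex.I).cexp.const_mul (c : ℂ)
    rw [hA]
    refine h1.congr_deriv ?_
    push_cast; ring
  have hyder : ∀ t, HasDerivAt y
      (((2 * π * k : ℂ) * Complex.I * A t) • x t + A t • deriv x t) t := by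
    intro t
    have := (hAder t).smul (hx t).hasDerivAt
    rw [funext hyA]
    refine this.congr_deriv ?_
    rw [add_comm]
  refine ⟨fun t => (hyder t).differentiableAt, ?_, ?_⟩
  · intro t
    rw [hyA, hyA, hxper]
    congr 1
    have hexp : (((2 * π * (θ + k * (t+1)) : ℝ) : ℂ) * Complex.I)
        = ((2 * π * (θ + k * t) : ℝ) : ℂ) * Complex.I + (k : ℂ) * (2 * π * Complex.I) := by
      push_cast; ring
    simp only [hA]
    rw [hexp, Complex.exp_add, Complex.exp_int_mul_two_pi_mul_I, mul_one]
  · intro t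
    rw [(hyder t).deriv, hxeq t, hyA t]
    have hGy : G t (A t • x t) = A t • G t (x t) := by
      simp only [hA]
      exact G_equiv H G hgrad hinv hhom t c (2 * π * (θ + k * t)) hc (x t)
    rw [hGy]
    match_scalars
    all_goals push_cast [Complex.coe_algebraMap]
    all_goals ring
end
end

section
/- Let H : ℝ × ℂ^{n+1} → ℝ be continuously differentiable in the second variable, S¹-invariant in x and positively 2-homogeneous in x. Let x : ℝ → ℂ^{n+1} be a differentiable 1-periodic curve with x(t) ≠ 0 for all t satisfying ẋ(t) = i·(∇ₓH(t, x(t)) − 2πλ·x(t)), and let u : ℝ → ℂ \ {0} be a differentiable 1-periodic function such that x'(t) := u(t)·x(t) satisfies ẋ'(t) = i·(∇ₓH(t, x'(t)) − 2πλ'·x'(t)) for all t, for some λ' ∈ ℝ. Then λ' − λ ∈ ℤ and u(t) = u(0)·e^{−2πi(λ' − λ)t} for all t. -/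
noncomputable section

open Real

/-!
`S¹`-invariance and positive 2-homogeneity make `H` homogeneous of degree `|c|²` under complex
scalars `c`, so its gradient is complex linear: `∇H(c x) = c ∇H(x)`. Substituting `x' = u x` into
the `λ'`-equation therefore leaves `(u̇ − 2πi(λ − λ') u) x = 0`, whence
`u(t) = u(0) e^{2πi(λ − λ')t}`, and `1`-periodicity of `u` forces `λ' − λ ∈ ℤ`.
-/

open Complex

theorem apply_smul_eq_norm_sq_mul {E : Type*} [AddCommGroup E] [Module ℂ E] {f : E → ℝ}
    (hinv : ∀ (θ : ℝ) x, f (exp ((θ : ℂ) * I) • x) = f x)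
    (hhom : ∀ r : ℝ, 0 ≤ r → ∀ x, f (r • x) = r ^ 2 * f x) (c : ℂ) (x : E) :
    f (c • x) = ‖c‖ ^ 2 * f x := by
  conv_lhs => rw [← norm_mul_exp_arg_mul_I c, mul_smul, coe_smul]
  rw [hhom _ (norm_nonneg c), hinv]

section EuclideanSpace

variable {ι : Type*} [Fintype ι]

theorem EuclideanSpace.real_inner_smul_right_complex (c : ℂ) (v w : EuclideanSpace ℂ ι) :
    inner ℝ v (c • w) = inner ℝ ((starRingEnd ℂ) c • v) w := by
  simp only [PiLp.inner_apply, PiLp.smul_apply, smul_eq_mul, Complex.inner, map_mul, conj_conj]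
  refine Finset.sum_congr rfl fun i _ => ?_
  ring_nf

theorem HasGradientAt.eq_smul_of_apply_smul {f : EuclideanSpace ℂ ι → ℝ} {c : ℂ} (hc : c ≠ 0)
    (hf : ∀ y, f (c • y) = ‖c‖ ^ 2 * f y) {x g g' : EuclideanSpace ℂ ι}
    (hg : HasGradientAt f g x) (hg' : HasGradientAt f g' (c • x)) : g' = c • g := by
  have hcomp : HasFDerivAt (fun y => f (c • y))
      ((InnerProductSpace.toDual ℝ _ g').comp (c • ContinuousLinearMap.id ℝ _)) x :=
    hg'.hasFDerivAt.comp x ((hasFDerivAt_id x).const_smul c)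
  have hscaled : HasFDerivAt (fun y => f (c • y))
      ((‖c‖ ^ 2 : ℝ) • InnerProductSpace.toDual ℝ _ g) x := by
    simpa only [hf] using hg.hasFDerivAt.const_mul (‖c‖ ^ 2)
  have hconj : (starRingEnd ℂ) c • g' = (‖c‖ ^ 2 : ℝ) • g := by
    refine ext_inner_right ℝ fun v => ?_
    have happly := congrArg (fun L => L v) (hcomp.unique hscaled)
    simp only [ContinuousLinearMap.comp_apply, FunLike.coe_smul, Pi.smul_apply,
      ContinuousLinearMap.id_apply, InnerProductSpace.toDual_apply_apply, smul_eq_mul] at happly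
    rw [← EuclideanSpace.real_inner_smul_right_complex, happly, real_inner_smul_left]
  have hnorm : (‖c‖ ^ 2 : ℝ) ≠ 0 := by positivity
  refine smul_right_injective _ hnorm ?_
  calc (‖c‖ ^ 2 : ℝ) • g' = (c * (starRingEnd ℂ) c) • g' := by
        rw [mul_conj, ← Complex.sq_norm, coe_smul]
    _ = (‖c‖ ^ 2 : ℝ) • c • g := by rw [mul_smul, hconj, smul_comm]

end EuclideanSpace

theorem HasDerivAt.eq_mul_of_smul_twisted {E : Type*} [NormedAddCommGroup E] [NormedSpace ℂ E]
    {x : ℝ → E} {u : ℝ → ℂ} {t lam lam' : ℝ} {g : E} {u' : ℂ} (hu : HasDerivAt u u' t)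
    (hx : HasDerivAt x (I • (g - (2 * π * lam : ℝ) • x t)) t)
    (hux : HasDerivAt (fun s => u s • x s) (I • (u t • g - (2 * π * lam' : ℝ) • (u t • x t))) t)
    (hxt : x t ≠ 0) : u' = ((2 * π * (lam - lam') : ℝ) : ℂ) * I * u t := by
  have hsum := (hu.smul hx).unique hux
  have hzero : (u' - ((2 * π * (lam - lam') : ℝ) : ℂ) * I * u t) • x t = 0 := by
    simp only [smul_sub, smul_smul, ← coe_smul] at hsum ⊢
    linear_combination (norm := module) hsum
  exact sub_eq_zero.1 ((smul_eq_zero.1 hzero).resolve_right hxt)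

theorem eq_mul_exp_of_hasDerivAt_eq_mul {u : ℝ → ℂ} {c : ℂ} (hu : ∀ t, HasDerivAt u (c * u t) t)
    (t : ℝ) : u t = u 0 * exp (c * t) := by
  have hexp : ∀ s : ℝ, HasDerivAt (fun s : ℝ => exp (-(c * s))) (exp (-(c * s)) * -c) s :=
    fun s => by simpa using (((hasDerivAt_id (s : ℂ)).const_mul c).neg.cexp).comp_ofReal
  have hconst : ∀ s, HasDerivAt (fun s : ℝ => u s * exp (-(c * s))) 0 s := fun s => by
    have h := (hu s).mul (hexp s)
    rwa [show c * u s * exp (-(c * s)) + u s * (exp (-(c * s)) * -c) = 0 by ring] at h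
  have h := is_const_of_deriv_eq_zero (fun s => (hconst s).differentiableAt)
    (fun s => (hconst s).deriv) t 0
  simp only [ofReal_zero, mul_zero, neg_zero, Complex.exp_zero, mul_one] at h
  rw [← h, mul_assoc, ← Complex.exp_add, neg_add_cancel, Complex.exp_zero, mul_one]

theorem exists_int_eq_of_mul_exp_mul_I_eq {a : ℂ} {θ : ℝ} (ha : a ≠ 0)
    (h : a * exp (θ * I) = a) : ∃ k : ℤ, θ = 2 * π * k := by
  obtain ⟨k, hk⟩ := exp_eq_one_iff.1 (mul_left_cancel₀ ha (h.trans (mul_one a).symm))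
  refine ⟨k, ?_⟩
  have hθ : (θ : ℂ) = ((2 * π * k : ℝ) : ℂ) :=
    mul_right_cancel₀ I_ne_zero (by push_cast; linear_combination hk)
  exact_mod_cast hθ

theorem twisted_solutions_same_projection_general (n : ℕ)
    (H : ℝ → EucC n → ℝ) (G : ℝ → EucC n → EucC n)
    -- `H` is continuously differentiable in the second variable, with gradient `G`
    (hgrad : ∀ t x, HasGradientAt (fun y => H t y) (G t x) x)
    -- `H` is `S¹`-invariant in `x`
    (hinv : ∀ t (θ : ℝ) x, H t (Complex.exp ((θ : ℂ) * Complex.I) • x) = H t x)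
    -- `H` is positively 2-homogeneous in `x`
    (hhom : ∀ t (r : ℝ), 0 ≤ r → ∀ x, H t (r • x) = r ^ 2 * H t x)
    (lam lam' : ℝ) (x : ℝ → EucC n)
    (hx : ∀ t, DifferentiableAt ℝ x t)
    (hxne : ∀ t, x t ≠ 0)
    (hxeq : ∀ t, deriv x t = Complex.I • (G t (x t) - ((2 * π * lam : ℝ)) • x t))
    (u : ℝ → ℂ)
    (hu : ∀ t, DifferentiableAt ℝ u t)
    (huper : ∀ t, u (t + 1) = u t)
    (hune : ∀ t, u t ≠ 0)
    (x' : ℝ → EucC n) (hx' : ∀ t, x' t = u t • x t)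
    (hx'eq : ∀ t, deriv x' t = Complex.I • (G t (x' t) - ((2 * π * lam' : ℝ)) • x' t)) :
    (∃ k : ℤ, lam' - lam = (k : ℝ)) ∧
    (∀ t, u t = u 0 * Complex.exp (((-(2 * π * (lam' - lam) * t) : ℝ) : ℂ) * Complex.I)) := by
  have hx'_eq : x' = fun s => u s • x s := funext hx'
  have hu_deriv : ∀ t, HasDerivAt u (((2 * π * (lam - lam') : ℝ) : ℂ) * I * u t) t := fun t => by
    have hG : G t (u t • x t) = u t • G t (x t) :=
      (hgrad t (x t)).eq_smul_of_apply_smul (hune t)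
        (apply_smul_eq_norm_sq_mul (hinv t) (hhom t) (u t)) (hgrad t (u t • x t))
    have hx't : HasDerivAt x' (deriv x' t) t := by
      rw [hx'_eq]; exact ((hu t).smul (hx t)).hasDerivAt
    rw [hx'eq t, hx' t, hG, hx'_eq] at hx't
    have hxt := (hx t).hasDerivAt
    rw [hxeq t] at hxt
    have hut := (hu t).hasDerivAt
    rwa [hut.eq_mul_of_smul_twisted hxt hx't (hxne t)] at hut
  have hsol := eq_mul_exp_of_hasDerivAt_eq_mul hu_deriv
  obtain ⟨k, hk⟩ := exists_int_eq_of_mul_exp_mul_I_eq (hune 0) (θ := 2 * π * (lam - lam')) <| by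
    simpa [show u 1 = u 0 by simpa using huper 0] using (hsol 1).symm
  refine ⟨⟨-k, ?_⟩, fun t => ?_⟩
  · have h2π : (2 * π : ℝ) ≠ 0 := by positivity
    push_cast
    linarith [mul_left_cancel₀ h2π hk]
  · rw [hsol t]
    congr 2
    push_cast
    ring

/-- If a nowhere vanishing 1-periodic solution `x` of the `λ`-twisted Hamiltonian equation
is multiplied by a nowhere vanishing 1-periodic complex function `u` and again yields a
solution of the `λ'`-twisted equation, then `λ' − λ ∈ ℤ` and
`u(t) = u(0) e^{−2πi(λ'−λ)t}` : all solutions projecting to a given solution on `ℂℙⁿ`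
belong to the `ℂ × ℤ`-family of one of them. -/
theorem twisted_solutions_same_projection (n : ℕ)
    (H : ℝ → EucC n → ℝ) (G : ℝ → EucC n → EucC n)
    -- `H` is continuously differentiable in the second variable, with gradient `G`
    (hgrad : ∀ t x, HasGradientAt (fun y => H t y) (G t x) x)
    (hGcont : ∀ t, Continuous fun x => G t x)
    -- `H` is `S¹`-invariant in `x`
    (hinv : ∀ t (θ : ℝ) x, H t (Complex.exp ((θ : ℂ) * Complex.I) • x) = H t x)
    -- `H` is positively 2-homogeneous in `x`
    (hhom : ∀ t (r : ℝ), 0 ≤ r → ∀ x, H t (r • x) = r ^ 2 * H t x)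
    (lam lam' : ℝ) (x : ℝ → EucC n)
    (hx : ∀ t, DifferentiableAt ℝ x t)
    (hxper : ∀ t, x (t + 1) = x t)
    (hxne : ∀ t, x t ≠ 0)
    (hxeq : ∀ t, deriv x t = Complex.I • (G t (x t) - ((2 * π * lam : ℝ)) • x t))
    (u : ℝ → ℂ)
    (hu : ∀ t, DifferentiableAt ℝ u t)
    (huper : ∀ t, u (t + 1) = u t)
    (hune : ∀ t, u t ≠ 0)
    (x' : ℝ → EucC n) (hx' : ∀ t, x' t = u t • x t)
    (hx'eq : ∀ t, deriv x' t = Complex.I • (G t (x' t) - ((2 * π * lam' : ℝ)) • x' t)) :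
    (∃ k : ℤ, lam' - lam = (k : ℝ)) ∧
    (∀ t, u t = u 0 * Complex.exp (((-(2 * π * (lam' - lam) * t) : ℝ) : ℂ) * Complex.I)) :=
  twisted_solutions_same_projection_general n H G hgrad hinv hhom lam lam' x hx hxne hxeq u hu huper
    hune x' hx' hx'eq
end
end

section
/- Let E be a real Hilbert space and P⁺, P⁻, P⁰ orthogonal projections on E with mutually orthogonal ranges, P⁺ + P⁻ + P⁰ = id, and the range of P⁰ finite-dimensional; set L := P⁺ − P⁻. Let K : E → E be continuous and compact (mapping bounded sets to relatively compact sets), let A : E → E be a compact bounded linear operator, and let λ₀ ∈ ℝ. If L x + K(x) + λ₀·A x ≠ 0 for every x ∈ E with ‖x‖ = 1, then there exists ε > 0 such that ‖L x + K(x) + λ·A x‖ > ε for every λ ∈ (λ₀ − ε, λ₀ + ε) and every x ∈ E with ‖x‖ = 1. -/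
/-!
Since the ranges of `P⁺` and `P⁻` are orthogonal, `L² = id - P⁰`. Applying `L` to
`F(λ, x) := L x + K x + λ A x` therefore gives `x = L (F(λ, x)) + P⁰ x - L (K x) - λ L (A x)`,
in which `P⁰`, `K` and `A` are compact. Hence if `F(λₙ, xₙ) → 0` for unit vectors `xₙ` and
`λₙ → λ₀`, a subsequence of `xₙ` converges, and its limit is a zero of `F(λ₀, ·)` on the unit
sphere.
-/

open Filter Topology Bornology RealInnerProductSpace

theorem ContinuousLinearMap.isCompactOperator_of_finiteDimensional_range
    {𝕜 E F : Type*} [NontriviallyNormedField 𝕜] [LocallyCompactSpace 𝕜]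
    [NormedAddCommGroup E] [NormedSpace 𝕜 E] [NormedAddCommGroup F] [NormedSpace 𝕜 F]
    (T : E →L[𝕜] F) [FiniteDimensional 𝕜 (LinearMap.range (T : E →ₗ[𝕜] F))] :
    IsCompactOperator T :=
  have := FiniteDimensional.proper 𝕜 (LinearMap.range (T : E →ₗ[𝕜] F))
  (isCompactOperator_of_locallyCompactSpace_dom
    (T.codRestrict _ (LinearMap.mem_range_self (T : E →ₗ[𝕜] F)))).clm_comp
    (Submodule.subtypeL _)

theorem ContinuousLinearMap.apply_apply_eq_zero_of_inner_eq_zero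
    {E : Type*} [NormedAddCommGroup E] [InnerProductSpace ℝ E] [CompleteSpace E]
    {P Q : E →L[ℝ] E} (hP : IsSelfAdjoint P) (h : ∀ x y, ⟪P x, Q y⟫ = 0) (y : E) :
    P (Q y) = 0 :=
  ext_inner_left ℝ fun z => by
    rw [inner_zero_right, ← h z y]; exact (hP.isSymmetric z (Q y)).symm

theorem ContinuousLinearMap.sub_apply_sub_apply_of_orthogonal_projections
    {E : Type*} [NormedAddCommGroup E] [InnerProductSpace ℝ E] [CompleteSpace E]
    {Pp Pm P0 : E →L[ℝ] E} (hPp_proj : Pp.comp Pp = Pp) (hPp_sa : IsSelfAdjoint Pp)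
    (hPm_proj : Pm.comp Pm = Pm) (hPm_sa : IsSelfAdjoint Pm)
    (horth : ∀ x y : E, ⟪Pp x, Pm y⟫ = (0 : ℝ))
    (hsum : Pp + Pm + P0 = ContinuousLinearMap.id ℝ E) (x : E) :
    (Pp - Pm) ((Pp - Pm) x) = x - P0 x := by
  have hPpPm := apply_apply_eq_zero_of_inner_eq_zero hPp_sa horth x
  have hPmPp := apply_apply_eq_zero_of_inner_eq_zero hPm_sa
    (fun x y => real_inner_comm (Pm x) (Pp y) ▸ horth y x) x
  have hx : Pp x + Pm x + P0 x = x := congr($hsum x)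
  have hPp : Pp (Pp x) = Pp x := congr($hPp_proj x)
  have hPm : Pm (Pm x) = Pm x := congr($hPm_proj x)
  simp only [sub_apply, map_sub, hPp, hPm, hPpPm, hPmPp]
  rw [sub_zero, zero_sub, sub_neg_eq_add, eq_sub_iff_add_eq, hx]

section Field

variable {E : Type*} [NormedAddCommGroup E] [NormedSpace ℝ E]
  {L P A : E →L[ℝ] E} {K : E → E}

theorem exists_subseq_tendsto_of_field_tendsto_zero
    (hLL : ∀ x, L (L x) = x - P x) (hP : IsCompactOperator P) (hA : IsCompactOperator A)
    (hK : ∀ s : Set E, IsBounded s → IsCompact (closure (K '' s)))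
    {s : Set E} (hs : IsBounded s) {x : ℕ → E} (hx : ∀ n, x n ∈ s)
    {lam : ℕ → ℝ} {lam0 : ℝ} (hlam : Tendsto lam atTop (𝓝 lam0))
    (hF : Tendsto (fun n => L (x n) + K (x n) + lam n • A (x n)) atTop (𝓝 0)) :
    ∃ y, ∃ φ : ℕ → ℕ, StrictMono φ ∧ Tendsto (x ∘ φ) atTop (𝓝 y) := by
  have hrep : ∀ n, x n = L (L (x n) + K (x n) + lam n • A (x n)) + P (x n)
      - L (K (x n)) - lam n • L (A (x n)) := fun n => by
    simp only [map_add, map_smul, hLL]; abel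
  have hcpt := (hK s hs).prod
    ((hA.isCompact_closure_image_of_bounded hs).prod (hP.isCompact_closure_image_of_bounded hs))
  obtain ⟨⟨k, a, p⟩, -, φ, hφ, hconv⟩ :=
    hcpt.tendsto_subseq (x := fun n => (K (x n), A (x n), P (x n))) fun n =>
      ⟨subset_closure ⟨_, hx n, rfl⟩, subset_closure ⟨_, hx n, rfl⟩,
      subset_closure ⟨_, hx n, rfl⟩⟩
  refine ⟨L 0 + p - L k - lam0 • L a, φ, hφ, ?_⟩
  have hk := hconv.fst_nhds
  have ha := hconv.snd_nhds.fst_nhds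
  have hp := hconv.snd_nhds.snd_nhds
  have hlim := ((((L.continuous.tendsto 0).comp (hF.comp hφ.tendsto_atTop)).add hp).sub
    ((L.continuous.tendsto k).comp hk)).sub
    ((hlam.comp hφ.tendsto_atTop).smul ((L.continuous.tendsto a).comp ha))
  exact hlim.congr fun n => (hrep (φ n)).symm

theorem exists_pos_lt_norm_field_on_sphere_of_ne_zero
    (hLL : ∀ x, L (L x) = x - P x) (hP : IsCompactOperator P) (hA : IsCompactOperator A)
    (hKcont : Continuous K) (hK : ∀ s : Set E, IsBounded s → IsCompact (closure (K '' s)))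
    {lam0 : ℝ} (h0 : ∀ x : E, ‖x‖ = 1 → L x + K x + lam0 • A x ≠ 0) :
    ∃ ε > (0 : ℝ), ∀ lam ∈ Set.Ioo (lam0 - ε) (lam0 + ε), ∀ x : E, ‖x‖ = 1 →
      ε < ‖L x + K x + lam • A x‖ := by
  by_contra! hcon
  choose lam hlam x hx hF using fun n : ℕ => hcon (1 / (n + 1)) Nat.one_div_pos_of_nat
  have hlam_lim : Tendsto lam atTop (𝓝 lam0) :=
    tendsto_iff_dist_tendsto_zero.2 <| squeeze_zero (fun _ => dist_nonneg)
      (fun n => (abs_sub_lt_iff.2 ⟨by linarith [(hlam n).2], by linarith [(hlam n).1]⟩).le)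
      tendsto_one_div_add_atTop_nhds_zero_nat
  have hF_lim := squeeze_zero_norm hF tendsto_one_div_add_atTop_nhds_zero_nat
  obtain ⟨y, φ, hφ, hy⟩ := exists_subseq_tendsto_of_field_tendsto_zero hLL hP hA hK
    (Metric.isBounded_sphere (x := (0 : E)) (r := 1)) (fun n => mem_sphere_zero_iff_norm.2 (hx n))
    hlam_lim hF_lim
  have hy_norm : ‖y‖ = 1 := mem_sphere_zero_iff_norm.1 <|
    Metric.isClosed_sphere.mem_of_tendsto hy (Eventually.of_forall fun n =>
      mem_sphere_zero_iff_norm.2 (hx (φ n)))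
  have hcont : Continuous fun q : ℝ × E => L q.2 + K q.2 + q.1 • A q.2 := by fun_prop
  refine h0 y hy_norm (tendsto_nhds_unique ?_ (hF_lim.comp hφ.tendsto_atTop))
  exact (hcont.tendsto (lam0, y)).comp ((hlam_lim.comp hφ.tendsto_atTop).prodMk_nhds hy)

end Field

theorem LS_field_bounded_away_on_sphere_general
    (E : Type*) [NormedAddCommGroup E] [InnerProductSpace ℝ E] [CompleteSpace E]
    (Pp Pm P0 : E →L[ℝ] E)
    -- orthogonal projections
    (hPp_proj : Pp.comp Pp = Pp) (hPp_sa : IsSelfAdjoint Pp)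
    (hPm_proj : Pm.comp Pm = Pm) (hPm_sa : IsSelfAdjoint Pm)
    -- with mutually orthogonal ranges
    (horth1 : ∀ x y : E, ⟪Pp x, Pm y⟫ = (0 : ℝ))
    -- summing to the identity
    (hsum : Pp + Pm + P0 = ContinuousLinearMap.id ℝ E)
    -- range of `P⁰` finite-dimensional
    (hfin : FiniteDimensional ℝ (LinearMap.range (P0 : E →ₗ[ℝ] E)))
    -- `K` continuous and compact (maps bounded sets to relatively compact sets)
    (K : E → E) (hKcont : Continuous K)
    (hKcpt : ∀ s : Set E, Bornology.IsBounded s → IsCompact (closure (K '' s)))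
    -- `A` a compact bounded linear operator
    (A : E →L[ℝ] E) (hA : IsCompactOperator A)
    (lam0 : ℝ)
    (h0 : ∀ x : E, ‖x‖ = 1 → (Pp - Pm) x + K x + lam0 • A x ≠ 0) :
    ∃ ε > (0 : ℝ), ∀ lam ∈ Set.Ioo (lam0 - ε) (lam0 + ε), ∀ x : E, ‖x‖ = 1 →
      ε < ‖(Pp - Pm) x + K x + lam • A x‖ :=
  exists_pos_lt_norm_field_on_sphere_of_ne_zero
    (ContinuousLinearMap.sub_apply_sub_apply_of_orthogonal_projections
      hPp_proj hPp_sa hPm_proj hPm_sa horth1 hsum)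
    (P0.isCompactOperator_of_finiteDimensional_range) hA hKcont hKcpt h0

/-- Abstract Hilbert space form of Lemma 5 of the paper: if the `𝓛𝓢`-vector field
`L + K + λ₀·A` (with `L = P⁺ − P⁻` coming from an orthogonal splitting with
finite-dimensional null part) does not vanish on the unit sphere, then it is bounded away
from zero on the unit sphere, uniformly for `λ` close to `λ₀`. -/
theorem LS_field_bounded_away_on_sphere
    (E : Type*) [NormedAddCommGroup E] [InnerProductSpace ℝ E] [CompleteSpace E]
    (Pp Pm P0 : E →L[ℝ] E)
    -- orthogonal projections
    (hPp_proj : Pp.comp Pp = Pp) (hPp_sa : IsSelfAdjoint Pp)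
    (hPm_proj : Pm.comp Pm = Pm) (hPm_sa : IsSelfAdjoint Pm)
    (hP0_proj : P0.comp P0 = P0) (hP0_sa : IsSelfAdjoint P0)
    -- with mutually orthogonal ranges
    (horth1 : ∀ x y : E, ⟪Pp x, Pm y⟫ = (0 : ℝ))
    (horth2 : ∀ x y : E, ⟪Pp x, P0 y⟫ = (0 : ℝ))
    (horth3 : ∀ x y : E, ⟪Pm x, P0 y⟫ = (0 : ℝ))
    -- summing to the identity
    (hsum : Pp + Pm + P0 = ContinuousLinearMap.id ℝ E)
    -- range of `P⁰` finite-dimensional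
    (hfin : FiniteDimensional ℝ (LinearMap.range (P0 : E →ₗ[ℝ] E)))
    -- `K` continuous and compact (maps bounded sets to relatively compact sets)
    (K : E → E) (hKcont : Continuous K)
    (hKcpt : ∀ s : Set E, Bornology.IsBounded s → IsCompact (closure (K '' s)))
    -- `A` a compact bounded linear operator
    (A : E →L[ℝ] E) (hA : IsCompactOperator A)
    (lam0 : ℝ)
    (h0 : ∀ x : E, ‖x‖ = 1 → (Pp - Pm) x + K x + lam0 • A x ≠ 0) :
    ∃ ε > (0 : ℝ), ∀ lam ∈ Set.Ioo (lam0 - ε) (lam0 + ε), ∀ x : E, ‖x‖ = 1 →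
      ε < ‖(Pp - Pm) x + K x + lam • A x‖ :=
  LS_field_bounded_away_on_sphere_general E Pp Pm P0 hPp_proj hPp_sa hPm_proj hPm_sa horth1 hsum
    hfin K hKcont hKcpt A hA lam0 h0
end

section
/- Let E be a real Hilbert space and P⁺, P⁻, P⁰ orthogonal projections on E with mutually orthogonal ranges, P⁺ + P⁻ + P⁰ = id, and the range of P⁰ finite-dimensional; set L := P⁺ − P⁻. Let K : E → E be continuous, compact and positively 1-homogeneous (K(r·x) = r·K(x) for all r ≥ 0), let A : E → E be a compact bounded linear operator, and let λ₀ ∈ ℝ. If L x + K(x) + λ₀·A x ≠ 0 for every x with ‖x‖ = 1, then there exists ε > 0 such that for every λ ∈ (λ₀ − ε, λ₀ + ε) and every x ∈ E one has ‖L x + K(x) + λ·A x‖ ≥ ε·‖x‖; in particular, for such λ, L x + K(x) + λ·A x = 0 implies x = 0. -/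
noncomputable section

open Real RealInnerProductSpace

set_option maxHeartbeats 1000000 in
/-- Corollary of Lemma 5 of the paper, in abstract Hilbert space form: if `K` is moreover
positively 1-homogeneous and `L + K + λ₀·A` does not vanish on the unit sphere, then for all
`λ` close to `λ₀` one has `‖Lx + K(x) + λ·Ax‖ ≥ ε‖x‖`; in particular the equation
`Lx + K(x) + λ·Ax = 0` has no nonzero solutions for such `λ`. -/
theorem LS_field_no_nonzero_zeros_near
    (E : Type*) [NormedAddCommGroup E] [InnerProductSpace ℝ E] [CompleteSpace E]
    (Pp Pm P0 : E →L[ℝ] E)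
    -- orthogonal projections
    (hPp_proj : Pp.comp Pp = Pp) (hPp_sa : IsSelfAdjoint Pp)
    (hPm_proj : Pm.comp Pm = Pm) (hPm_sa : IsSelfAdjoint Pm)
    (hP0_proj : P0.comp P0 = P0) (hP0_sa : IsSelfAdjoint P0)
    -- with mutually orthogonal ranges
    (horth1 : ∀ x y : E, ⟪Pp x, Pm y⟫ = (0 : ℝ))
    (horth2 : ∀ x y : E, ⟪Pp x, P0 y⟫ = (0 : ℝ))
    (horth3 : ∀ x y : E, ⟪Pm x, P0 y⟫ = (0 : ℝ))
    -- summing to the identity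
    (hsum : Pp + Pm + P0 = ContinuousLinearMap.id ℝ E)
    -- range of `P⁰` finite-dimensional
    (hfin : FiniteDimensional ℝ (LinearMap.range (P0 : E →ₗ[ℝ] E)))
    -- `K` continuous, compact and positively 1-homogeneous
    (K : E → E) (hKcont : Continuous K)
    (hKcpt : ∀ s : Set E, Bornology.IsBounded s → IsCompact (closure (K '' s)))
    (hKhom : ∀ (r : ℝ), 0 ≤ r → ∀ x, K (r • x) = r • K x)
    -- `A` a compact bounded linear operator
    (A : E →L[ℝ] E) (hA : IsCompactOperator A)
    (lam0 : ℝ)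
    (h0 : ∀ x : E, ‖x‖ = 1 → (Pp - Pm) x + K x + lam0 • A x ≠ 0) :
    ∃ ε > (0 : ℝ), ∀ lam ∈ Set.Ioo (lam0 - ε) (lam0 + ε), ∀ x : E,
      (ε * ‖x‖ ≤ ‖(Pp - Pm) x + K x + lam • A x‖) ∧
      ((Pp - Pm) x + K x + lam • A x = 0 → x = 0) := by
  classical
  set L : E →L[ℝ] E := Pp - Pm with hLdef
  set F : E → E := fun x => L x + K x + lam0 • A x with hFdef
  have hFcont : Continuous F :=
    (L.continuous.add hKcont).add (continuous_const.smul A.continuous)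
  -- Pp (Pm x) = 0 and Pm (Pp x) = 0
  have hPpPm : ∀ x : E, Pp (Pm x) = 0 := by
    intro x
    have hpp : Pp (Pp (Pm x)) = Pp (Pm x) := by
      have := congrArg (fun T : E →L[ℝ] E => T (Pm x)) hPp_proj
      simpa using this
    have h := hPp_sa.isSymmetric (Pp (Pm x)) (Pm x)
    simp only [ContinuousLinearMap.coe_coe] at h
    rw [hpp, horth1] at h
    exact inner_self_eq_zero.mp h.symm
  have hPmPp : ∀ x : E, Pm (Pp x) = 0 := by
    intro x
    have hpm : Pm (Pm (Pp x)) = Pm (Pp x) := by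
      have := congrArg (fun T : E →L[ℝ] E => T (Pp x)) hPm_proj
      simpa using this
    have h := hPm_sa.isSymmetric (Pm (Pp x)) (Pp x)
    simp only [ContinuousLinearMap.coe_coe] at h
    rw [hpm] at h
    have h0' : ⟪Pm (Pp x), Pp x⟫ = (0 : ℝ) := by
      rw [real_inner_comm]; exact horth1 x (Pp x)
    rw [h0'] at h
    exact inner_self_eq_zero.mp h.symm
  -- L (L x) = x - P0 x
  have hLL : ∀ x : E, L (L x) = x - P0 x := by
    intro x
    have hsum' : Pp x + Pm x + P0 x = x := by
      have := congrArg (fun T : E →L[ℝ] E => T x) hsum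
      simpa using this
    have h1 : Pp (Pp x) = Pp x := by
      have := congrArg (fun T : E →L[ℝ] E => T x) hPp_proj
      simpa using this
    have h2 : Pm (Pm x) = Pm x := by
      have := congrArg (fun T : E →L[ℝ] E => T x) hPm_proj
      simpa using this
    have hLx : L x = Pp x - Pm x := rfl
    rw [hLx, map_sub]
    rw [show ∀ y : E, L y = Pp y - Pm y from fun _ => rfl,
        show ∀ y : E, L y = Pp y - Pm y from fun _ => rfl]
    rw [h1, h2, hPpPm, hPmPp, sub_zero, zero_sub, sub_neg_eq_add, eq_sub_iff_add_eq]
    exact hsum'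
  -- K 0 = 0, hence F 0 = 0
  have hK0 : K 0 = 0 := by
    have := hKhom 0 le_rfl 0
    simpa using this
  have hF0 : F 0 = 0 := by simp [hFdef, hK0]
  -- positive homogeneity of F
  have hFhom : ∀ (r : ℝ), 0 ≤ r → ∀ x : E, F (r • x) = r • F x := by
    intro r hr x
    simp only [hFdef, map_smul, hKhom r hr, smul_add, smul_comm r lam0]
  -- Main claim: F is bounded below on the unit sphere
  have key : ∃ δ > (0 : ℝ), ∀ x : E, ‖x‖ = 1 → δ ≤ ‖F x‖ := by
    by_contra hcon
    push_neg at hcon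
    have hexists : ∀ n : ℕ, ∃ x : E, ‖x‖ = 1 ∧ ‖F x‖ < 1 / (n + 1) := by
      intro n
      obtain ⟨x, hx1, hx2⟩ := hcon (1 / (n + 1)) (by positivity)
      exact ⟨x, hx1, hx2⟩
    choose x hx1 hx2 using hexists
    -- F (x n) → 0
    have hF0lim : Filter.Tendsto (fun n => F (x n)) Filter.atTop (nhds 0) := by
      rw [tendsto_zero_iff_norm_tendsto_zero]
      refine squeeze_zero (fun n => norm_nonneg _) (fun n => (hx2 n).le) ?_
      exact tendsto_one_div_add_atTop_nhds_zero_nat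
    -- compactness of images
    have hsphere : Bornology.IsBounded (Metric.sphere (0 : E) 1) :=
      Metric.isBounded_sphere
    have hKcl : IsCompact (closure (K '' Metric.sphere (0 : E) 1)) := hKcpt _ hsphere
    have hAcl : IsCompact (closure (⇑A '' Metric.sphere (0 : E) 1)) :=
      hA.isCompact_closure_image_of_bounded hsphere
    have hxmem : ∀ n, x n ∈ Metric.sphere (0 : E) 1 := by
      intro n; simpa [Metric.mem_sphere, dist_eq_norm] using hx1 n
    -- extract subsequence along which K (x n) converges
    obtain ⟨k, -, φ1, hφ1, hk⟩ := hKcl.tendsto_subseq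
      (fun n => subset_closure (Set.mem_image_of_mem K (hxmem n)))
    -- extract further subsequence along which A (x n) converges
    obtain ⟨a, -, φ2, hφ2, ha⟩ := hAcl.tendsto_subseq
      (x := fun n => A (x (φ1 n)))
      (fun n => subset_closure (Set.mem_image_of_mem (⇑A) (hxmem (φ1 n))))
    -- extract further subsequence along which P0 (x n) converges
    haveI := hfin
    have hybdd : ∀ n : ℕ,
        (⟨P0 (x (φ1 (φ2 n))), LinearMap.mem_range_self _ _⟩ :
          LinearMap.range (P0 : E →ₗ[ℝ] E)) ∈
        Metric.closedBall (0 : LinearMap.range (P0 : E →ₗ[ℝ] E)) ‖P0‖ := by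
      intro n
      rw [Metric.mem_closedBall, dist_zero_right]
      show ‖P0 (x (φ1 (φ2 n)))‖ ≤ ‖P0‖
      calc ‖P0 (x (φ1 (φ2 n)))‖ ≤ ‖P0‖ * ‖x (φ1 (φ2 n))‖ := P0.le_opNorm _
        _ = ‖P0‖ := by rw [hx1]; ring
    obtain ⟨p, -, φ3, hφ3, hp⟩ := tendsto_subseq_of_bounded
      (Metric.isBounded_closedBall) hybdd
    set ψ : ℕ → ℕ := fun n => φ1 (φ2 (φ3 n)) with hψdef
    have hψmono : StrictMono ψ := hφ1.comp (hφ2.comp hφ3)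
    -- limits along ψ
    have hkψ : Filter.Tendsto (fun n => K (x (ψ n))) Filter.atTop (nhds k) :=
      hk.comp ((hφ2.comp hφ3).tendsto_atTop)
    have haψ : Filter.Tendsto (fun n => A (x (ψ n))) Filter.atTop (nhds a) :=
      ha.comp (hφ3.tendsto_atTop)
    have hpψ : Filter.Tendsto (fun n => P0 (x (ψ n))) Filter.atTop (nhds ((p : E))) := by
      have : Filter.Tendsto (fun n =>
          ((⟨P0 (x (ψ n)), LinearMap.mem_range_self _ _⟩ :
            LinearMap.range (P0 : E →ₗ[ℝ] E)) : E)) Filter.atTop (nhds ((p : E))) :=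
        (continuous_subtype_val.tendsto p).comp hp
      exact this
    have hFψ : Filter.Tendsto (fun n => F (x (ψ n))) Filter.atTop (nhds 0) :=
      hF0lim.comp (hψmono.tendsto_atTop)
    -- L (x (ψ n)) converges
    have hLψ : Filter.Tendsto (fun n => L (x (ψ n))) Filter.atTop
        (nhds (0 - k - lam0 • a)) := by
      have heq : ∀ n, L (x (ψ n)) = F (x (ψ n)) - K (x (ψ n)) - lam0 • A (x (ψ n)) := by
        intro n; simp [hFdef]; abel
      simp only [heq]
      exact (hFψ.sub hkψ).sub (haψ.const_smul lam0)
    -- hence x (ψ n) converges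
    set w : E := 0 - k - lam0 • a with hwdef
    have hxψ : Filter.Tendsto (fun n => x (ψ n)) Filter.atTop (nhds (L w + (p : E))) := by
      have heq : ∀ n, x (ψ n) = L (L (x (ψ n))) + P0 (x (ψ n)) := by
        intro n
        rw [hLL]
        abel
      have h1 : Filter.Tendsto (fun n => L (L (x (ψ n)))) Filter.atTop (nhds (L w)) :=
        (L.continuous.tendsto w).comp hLψ
      have := h1.add hpψ
      simpa only [← heq] using this
    set xinf : E := L w + (p : E) with hxinfdef
    have hnorm : ‖xinf‖ = 1 := by
      have h1 : Filter.Tendsto (fun n => ‖x (ψ n)‖) Filter.atTop (nhds ‖xinf‖) :=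
        (continuous_norm.tendsto xinf).comp hxψ
      have h2 : Filter.Tendsto (fun n => ‖x (ψ n)‖) Filter.atTop (nhds 1) := by
        simpa only [hx1] using tendsto_const_nhds (x := (1 : ℝ)) (f := Filter.atTop (α := ℕ))
      exact tendsto_nhds_unique h1 h2
    have hFzero : F xinf = 0 := by
      have h1 : Filter.Tendsto (fun n => F (x (ψ n))) Filter.atTop (nhds (F xinf)) :=
        (hFcont.tendsto xinf).comp hxψ
      exact tendsto_nhds_unique h1 hFψ
    exact h0 xinf hnorm hFzero
  obtain ⟨δ, hδpos, hbound⟩ := key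
  -- homogeneous lower bound: δ‖x‖ ≤ ‖F x‖ for all x
  have hhom : ∀ x : E, δ * ‖x‖ ≤ ‖F x‖ := by
    intro x
    rcases eq_or_ne x 0 with rfl | hx
    · simp [hF0]
    · have hxpos : (0 : ℝ) < ‖x‖ := norm_pos_iff.mpr hx
      set u : E := ‖x‖⁻¹ • x with hudef
      have hu : ‖u‖ = 1 := norm_smul_inv_norm hx
      have hFu : F u = ‖x‖⁻¹ • F x := hFhom _ (by positivity) x
      have := hbound u hu
      rw [hFu, norm_smul] at this
      have h2 : δ ≤ ‖x‖⁻¹ * ‖F x‖ := by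
        simpa [abs_of_pos (inv_pos.mpr hxpos)] using this
      calc δ * ‖x‖ ≤ (‖x‖⁻¹ * ‖F x‖) * ‖x‖ := by
            exact mul_le_mul_of_nonneg_right h2 (norm_nonneg x)
        _ = ‖F x‖ := by field_simp
  -- choose ε
  refine ⟨δ / (2 * (‖A‖ + 1)), by positivity, ?_⟩
  set ε : ℝ := δ / (2 * (‖A‖ + 1)) with hεdef
  have hεpos : 0 < ε := by positivity
  have hεA : ε * (‖A‖ + 1) = δ / 2 := by
    rw [hεdef]; field_simp
  have hε2 : ε ≤ δ / 2 := by nlinarith [norm_nonneg A, hεpos]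
  have hεA' : ε * ‖A‖ ≤ δ / 2 := by nlinarith [hεpos]
  intro lam hlam x
  have hlamabs : |lam - lam0| < ε := by
    rw [abs_sub_lt_iff]
    constructor <;> [linarith [hlam.2]; linarith [hlam.1]]
  have hFx : δ * ‖x‖ ≤ ‖F x‖ := hhom x
  set v : E := (lam - lam0) • A x with hvdef
  have hexpr : (Pp - Pm) x + K x + lam • A x = F x + v := by
    simp only [hFdef, hvdef, sub_smul]
    abel
  have hvnorm : ‖v‖ ≤ ε * (‖A‖ * ‖x‖) := by
    rw [hvdef, norm_smul]
    exact mul_le_mul hlamabs.le (A.le_opNorm x) (norm_nonneg _) hεpos.le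
  have htri : ‖F x‖ - ‖v‖ ≤ ‖F x + v‖ := by
    have h := norm_add_le (F x + v) (-v)
    simp only [add_neg_cancel_right, norm_neg] at h
    linarith
  have hmain : ε * ‖x‖ ≤ ‖(Pp - Pm) x + K x + lam • A x‖ := by
    rw [hexpr]
    have h1 : ε * ‖A‖ * ‖x‖ ≤ δ / 2 * ‖x‖ :=
      mul_le_mul_of_nonneg_right hεA' (norm_nonneg x)
    have h2 : ε * ‖x‖ ≤ δ / 2 * ‖x‖ :=
      mul_le_mul_of_nonneg_right hε2 (norm_nonneg x)
    linarith [hFx, hvnorm, htri, h1, h2]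
  refine ⟨hmain, fun hzero => ?_⟩
  rw [hzero, norm_zero] at hmain
  have hx0 : ‖x‖ ≤ 0 := nonpos_of_mul_nonpos_right hmain hεpos
  exact norm_le_zero_iff.mp hx0
end
end

section
/- Let E be a real Hilbert space and P⁺, P⁻, P⁰ orthogonal projections on E with mutually orthogonal ranges, P⁺ + P⁻ + P⁰ = id, and the range of P⁰ finite-dimensional; set L := P⁺ − P⁻. Let ν be a norm on E and C, C' > 0 constants such that ν(x) ≤ C·‖x‖ for all x ∈ E and ‖x‖ ≤ C'·ν(x) for all x in the range of P⁰. Let K : E → E satisfy ‖K(x)‖ ≤ a + b·ν(x) for all x ∈ E and some constants a, b ≥ 0. Then for every sequence (x_m) in E such that the sequences (ν(x_m)) and (‖L x_m + K(x_m)‖) are bounded, the sequence (‖x_m‖) is bounded. -/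
noncomputable section

open Real RealInnerProductSpace

/-- The a priori boundedness argument of Lemma 7 of the paper, in abstract Hilbert space
form: if `ν` is a norm dominated by the Hilbert norm and equivalent to it on the
finite-dimensional range of `P⁰`, and `‖K(x)‖ ≤ a + b·ν(x)`, then boundedness of `ν(x_m)`
and of `‖L x_m + K(x_m)‖` forces boundedness of `‖x_m‖`. -/
theorem bounded_of_nu_and_LK_bounded
    (E : Type*) [NormedAddCommGroup E] [InnerProductSpace ℝ E] [CompleteSpace E]
    (Pp Pm P0 : E →L[ℝ] E)
    -- orthogonal projections
    (hPp_proj : Pp.comp Pp = Pp) (hPp_sa : IsSelfAdjoint Pp)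
    (hPm_proj : Pm.comp Pm = Pm) (hPm_sa : IsSelfAdjoint Pm)
    (hP0_proj : P0.comp P0 = P0) (hP0_sa : IsSelfAdjoint P0)
    -- with mutually orthogonal ranges
    (horth1 : ∀ x y : E, ⟪Pp x, Pm y⟫ = (0 : ℝ))
    (horth2 : ∀ x y : E, ⟪Pp x, P0 y⟫ = (0 : ℝ))
    (horth3 : ∀ x y : E, ⟪Pm x, P0 y⟫ = (0 : ℝ))
    -- summing to the identity
    (hsum : Pp + Pm + P0 = ContinuousLinearMap.id ℝ E)
    -- range of `P⁰` finite-dimensional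
    (hfin : FiniteDimensional ℝ (LinearMap.range (P0 : E →ₗ[ℝ] E)))
    -- `ν` is a norm on `E`
    (ν : E → ℝ)
    (hν_nonneg : ∀ x, 0 ≤ ν x)
    (hν_add : ∀ x y, ν (x + y) ≤ ν x + ν y)
    (hν_smul : ∀ (c : ℝ) (x : E), ν (c • x) = |c| * ν x)
    (hν_def : ∀ x, ν x = 0 → x = 0)
    -- comparison constants
    (C C' : ℝ) (hC : 0 < C) (hC' : 0 < C')
    (hCle : ∀ x : E, ν x ≤ C * ‖x‖)
    (hC'le : ∀ x ∈ LinearMap.range (P0 : E →ₗ[ℝ] E), ‖x‖ ≤ C' * ν x)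
    -- `K` with sublinear bound in `ν`
    (K : E → E) (a b : ℝ) (ha : 0 ≤ a) (hb : 0 ≤ b)
    (hK : ∀ x, ‖K x‖ ≤ a + b * ν x)
    -- the sequence
    (x : ℕ → E)
    (hν_bdd : ∃ M : ℝ, ∀ m, ν (x m) ≤ M)
    (hLK_bdd : ∃ M : ℝ, ∀ m, ‖(Pp - Pm) (x m) + K (x m)‖ ≤ M) :
    ∃ M : ℝ, ∀ m, ‖x m‖ ≤ M := by

  obtain ⟨M₁, hM₁⟩ := hν_bdd
  obtain ⟨M₂, hM₂⟩ := hLK_bdd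
  -- abbreviations
  set ML : ℝ := M₂ + (a + b * M₁) with hML
  refine ⟨ML + C' * (M₁ + C * ML), fun m => ?_⟩
  set y := x m with hy
  -- key norm identity ‖(Pp+Pm) y‖ = ‖(Pp-Pm) y‖
  have hkey : ‖(Pp + Pm) y‖ = ‖(Pp - Pm) y‖ := by
    have h1 : ‖Pp y + Pm y‖ ^ 2 = ‖Pp y - Pm y‖ ^ 2 := by
      rw [norm_add_sq_real, norm_sub_sq_real, horth1 y y]
      ring
    have h2 : ‖Pp y + Pm y‖ = ‖Pp y - Pm y‖ := by
      rw [← Real.sqrt_sq (norm_nonneg (Pp y + Pm y)), ← Real.sqrt_sq (norm_nonneg (Pp y - Pm y)), h1]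
    simpa using h2
  -- bound on ‖(Pp - Pm) y‖
  have hL : ‖(Pp - Pm) y‖ ≤ ML := by
    have h1 : ‖(Pp - Pm) y‖ ≤ ‖(Pp - Pm) y + K y‖ + ‖K y‖ := by
      have := norm_add_le ((Pp - Pm) y + K y) (-(K y))
      simpa using this
    have h2 : ‖K y‖ ≤ a + b * ν y := hK y
    have h3 : a + b * ν y ≤ a + b * M₁ := by nlinarith [hM₁ m, hν_nonneg y]
    have h4 := hM₂ m
    rw [hML]; linarith
  -- ν bound on P0 y
  have hP0ν : ν (P0 y) ≤ M₁ + C * ML := by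
    have hsumapp : (Pp + Pm) y + P0 y = y := by
      have := congrArg (fun T : E →L[ℝ] E => T y) hsum
      simp only [ContinuousLinearMap.add_apply, ContinuousLinearMap.id_apply] at this
      simp only [ContinuousLinearMap.add_apply]
      rw [add_assoc] at this ⊢
      exact this
    have hdecomp : P0 y = y + (-1 : ℝ) • ((Pp + Pm) y) := by
      have h2 := hsumapp
      rw [add_comm] at h2
      have h := eq_sub_of_add_eq h2
      rw [h, sub_eq_add_neg, ← neg_one_smul ℝ ((Pp + Pm) y)]
    calc ν (P0 y) = ν (y + (-1 : ℝ) • ((Pp + Pm) y)) := by rw [hdecomp]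
      _ ≤ ν y + ν ((-1 : ℝ) • ((Pp + Pm) y)) := hν_add _ _
      _ = ν y + ν ((Pp + Pm) y) := by rw [hν_smul]; norm_num
      _ ≤ ν y + C * ‖(Pp + Pm) y‖ := by linarith [hCle ((Pp + Pm) y)]
      _ = ν y + C * ‖(Pp - Pm) y‖ := by rw [hkey]
      _ ≤ M₁ + C * ML := by nlinarith [hM₁ m, hL]
  -- norm bound on P0 y
  have hP0 : ‖P0 y‖ ≤ C' * (M₁ + C * ML) := by
    have hmem : P0 y ∈ LinearMap.range (P0 : E →ₗ[ℝ] E) := ⟨y, rfl⟩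
    have := hC'le (P0 y) hmem
    nlinarith
  -- conclude
  have hxy : (Pp + Pm) y + P0 y = y := by
    have := congrArg (fun T : E →L[ℝ] E => T y) hsum
    simp only [ContinuousLinearMap.add_apply, ContinuousLinearMap.id_apply] at this
    simp only [ContinuousLinearMap.add_apply]
    rw [add_assoc] at this ⊢
    exact this
  calc ‖y‖ = ‖(Pp + Pm) y + P0 y‖ := by rw [hxy]
    _ ≤ ‖(Pp + Pm) y‖ + ‖P0 y‖ := norm_add_le _ _
    _ = ‖(Pp - Pm) y‖ + ‖P0 y‖ := by rw [hkey]
    _ ≤ ML + C' * (M₁ + C * ML) := by linarith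
end
end

section
/- Let E be a real Hilbert space and P⁺, P⁻, P⁰ orthogonal projections on E with mutually orthogonal ranges, P⁺ + P⁻ + P⁰ = id, and the range of P⁰ finite-dimensional; set L := P⁺ − P⁻. Let ν be a norm on E and C, C' > 0 constants with ν(x) ≤ C·‖x‖ for all x and ‖x‖ ≤ C'·ν(x) for all x in the range of P⁰. Fix λ₀ ∈ ℝ, ε ∈ (0, 1/2), and let 𝒯 : [0,1] × E × [λ₀, λ₀+1] → E be such that: (i) each map x ↦ 𝒯(s, x, λ) is positively 1-homogeneous; (ii) 𝒯(s, x, λ) = L x + K(s, x, λ) with ‖K(s, x, λ)‖ ≤ a + b·ν(x) for constants a, b ≥ 0; (iii) ‖𝒯(s, x, λ)‖ > ε whenever ‖x‖ = 1 and λ ∈ [λ₀, λ₀ + ε] ∪ [λ₀ + 1 − ε, λ₀ + 1]. Let χ : ℝ → ℝ be differentiable with χ'(λ) = 1 for λ ∈ (λ₀ + ε, λ₀ + 1 − ε), and set g(x, λ) := π·(χ'(λ)·ν(x)² − 1). Then for every sequence (s_m, x_m, λ_m) ∈ [0,1] × E × [λ₀, λ₀+1] such that the sequences (‖𝒯(s_m,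 x_m, λ_m)‖) and (g(x_m, λ_m)) are bounded, the sequence (‖x_m‖) is bounded. -/
noncomputable section

open Real RealInnerProductSpace

lemma norm_add_eq_norm_sub_of_inner_zero {E : Type*} [NormedAddCommGroup E]
    [InnerProductSpace ℝ E] (u v : E) (h : ⟪u, v⟫ = (0 : ℝ)) : ‖u + v‖ = ‖u - v‖ := by
  have h1 : ‖u + v‖ ^ 2 = ‖u - v‖ ^ 2 := by
    rw [norm_add_sq_real, norm_sub_sq_real, h]; ring
  have n1 := norm_nonneg (u + v)
  have n2 := norm_nonneg (u - v)
  nlinarith [h1, n1, n2]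

/-- Lemma 7 of the paper in abstract Hilbert space form: for a two-parameter family of
positively 1-homogeneous `𝓛𝓢`-vector fields `𝒯(s,·,λ)` which is bounded away from zero on
the unit sphere for `λ` near the endpoints of `[λ₀, λ₀+1]`, boundedness of
`‖𝒯(s_m, x_m, λ_m)‖` and of `g(x_m, λ_m) = π(χ'(λ_m)·ν(x_m)² − 1)` implies boundedness of
`‖x_m‖`. -/
theorem bounded_of_T_and_g_bounded
    (E : Type*) [NormedAddCommGroup E] [InnerProductSpace ℝ E] [CompleteSpace E]
    (Pp Pm P0 : E →L[ℝ] E)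
    -- orthogonal projections
    (hPp_proj : Pp.comp Pp = Pp) (hPp_sa : IsSelfAdjoint Pp)
    (hPm_proj : Pm.comp Pm = Pm) (hPm_sa : IsSelfAdjoint Pm)
    (hP0_proj : P0.comp P0 = P0) (hP0_sa : IsSelfAdjoint P0)
    -- with mutually orthogonal ranges
    (horth1 : ∀ x y : E, ⟪Pp x, Pm y⟫ = (0 : ℝ))
    (horth2 : ∀ x y : E, ⟪Pp x, P0 y⟫ = (0 : ℝ))
    (horth3 : ∀ x y : E, ⟪Pm x, P0 y⟫ = (0 : ℝ))
    -- summing to the identity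
    (hsum : Pp + Pm + P0 = ContinuousLinearMap.id ℝ E)
    -- range of `P⁰` finite-dimensional
    (hfin : FiniteDimensional ℝ (LinearMap.range (P0 : E →ₗ[ℝ] E)))
    -- `ν` is a norm on `E`
    (ν : E → ℝ)
    (hν_nonneg : ∀ x, 0 ≤ ν x)
    (hν_add : ∀ x y, ν (x + y) ≤ ν x + ν y)
    (hν_smul : ∀ (c : ℝ) (x : E), ν (c • x) = |c| * ν x)
    (hν_def : ∀ x, ν x = 0 → x = 0)
    -- comparison constants
    (C C' : ℝ) (hC : 0 < C) (hC' : 0 < C')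
    (hCle : ∀ x : E, ν x ≤ C * ‖x‖)
    (hC'le : ∀ x ∈ LinearMap.range (P0 : E →ₗ[ℝ] E), ‖x‖ ≤ C' * ν x)
    (lam0 ε : ℝ) (hε : ε ∈ Set.Ioo (0 : ℝ) (1 / 2))
    -- the family `𝒯 : [0,1] × E × [λ₀, λ₀+1] → E`
    (T : ℝ → E → ℝ → E)
    -- (i) positive 1-homogeneity
    (hThom : ∀ s ∈ Set.Icc (0 : ℝ) 1, ∀ lam ∈ Set.Icc lam0 (lam0 + 1),
      ∀ (r : ℝ), 0 ≤ r → ∀ x, T s (r • x) lam = r • T s x lam)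
    -- (ii) `𝒯(s,·,λ) = L + K(s,·,λ)` with `‖K(s,x,λ)‖ ≤ a + b·ν(x)`
    (a b : ℝ) (ha : 0 ≤ a) (hb : 0 ≤ b)
    (hTK : ∀ s ∈ Set.Icc (0 : ℝ) 1, ∀ lam ∈ Set.Icc lam0 (lam0 + 1),
      ∀ x, ‖T s x lam - (Pp - Pm) x‖ ≤ a + b * ν x)
    -- (iii) bounded away from zero on the sphere near the endpoints
    (hTend : ∀ s ∈ Set.Icc (0 : ℝ) 1,
      ∀ lam ∈ Set.Icc lam0 (lam0 + ε) ∪ Set.Icc (lam0 + 1 - ε) (lam0 + 1),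
      ∀ x : E, ‖x‖ = 1 → ε < ‖T s x lam‖)
    -- the cut-off function `χ`
    (χ : ℝ → ℝ) (hχ : Differentiable ℝ χ)
    (hχ' : ∀ lam ∈ Set.Ioo (lam0 + ε) (lam0 + 1 - ε), deriv χ lam = 1)
    -- the sequence
    (s : ℕ → ℝ) (x : ℕ → E) (lam : ℕ → ℝ)
    (hs : ∀ m, s m ∈ Set.Icc (0 : ℝ) 1)
    (hlam : ∀ m, lam m ∈ Set.Icc lam0 (lam0 + 1))
    (hT_bdd : ∃ M : ℝ, ∀ m, ‖T (s m) (x m) (lam m)‖ ≤ M)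
    (hg_bdd : ∃ M : ℝ, ∀ m, |π * (deriv χ (lam m) * (ν (x m)) ^ 2 - 1)| ≤ M) :
    ∃ M : ℝ, ∀ m, ‖x m‖ ≤ M := by
  obtain ⟨MT, hMT⟩ := hT_bdd
  obtain ⟨Mg, hMg⟩ := hg_bdd
  obtain ⟨hε0, hε2⟩ := hε
  have hMT0 : 0 ≤ MT := le_trans (norm_nonneg _) (hMT 0)
  have hMg0 : 0 ≤ Mg := le_trans (abs_nonneg _) (hMg 0)
  have hπ : (0 : ℝ) < π := Real.pi_pos
  set c : ℝ := Real.sqrt (1 + Mg / π) with hc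
  have hc0 : 0 ≤ c := Real.sqrt_nonneg _
  set D : ℝ := MT + a + b * c with hD
  have hD0 : 0 ≤ D := by positivity
  refine ⟨max (MT / ε) (D + C' * (c + C * D)), fun m => ?_⟩
  by_cases hmid : lam m ∈ Set.Ioo (lam0 + ε) (lam0 + 1 - ε)
  · -- middle case: deriv χ = 1, so ν (x m) is bounded
    have hd := hχ' _ hmid
    have hνle : ν (x m) ≤ c := by
      have hgm := hMg m
      rw [hd, abs_le] at hgm
      have hν2 : (ν (x m)) ^ 2 ≤ 1 + Mg / π := by
        have h2 := hgm.2
        have h3 : (ν (x m)) ^ 2 - 1 ≤ Mg / π := by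
          rw [le_div_iff₀ hπ]; nlinarith
        linarith
      have := Real.sqrt_le_sqrt hν2
      rwa [Real.sqrt_sq (hν_nonneg _)] at this
    have hLb : ‖(Pp - Pm) (x m)‖ ≤ D := by
      have hK := hTK _ (hs m) _ (hlam m) (x m)
      calc ‖(Pp - Pm) (x m)‖
          = ‖T (s m) (x m) (lam m) - (T (s m) (x m) (lam m) - (Pp - Pm) (x m))‖ := by
            congr 1; abel
        _ ≤ ‖T (s m) (x m) (lam m)‖ + ‖T (s m) (x m) (lam m) - (Pp - Pm) (x m)‖ :=
            norm_sub_le _ _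
        _ ≤ MT + (a + b * ν (x m)) := add_le_add (hMT m) hK
        _ ≤ MT + (a + b * c) := by nlinarith
        _ = D := by rw [hD]; ring
    have hdecomp : Pp (x m) + Pm (x m) + P0 (x m) = x m := by
      have := ContinuousLinearMap.ext_iff.mp hsum (x m)
      simpa using this
    have hnormeq : ‖Pp (x m) + Pm (x m)‖ = ‖Pp (x m) - Pm (x m)‖ :=
      norm_add_eq_norm_sub_of_inner_zero _ _ (horth1 _ _)
    have hsumsub : ‖Pp (x m) + Pm (x m)‖ ≤ D := by
      rw [hnormeq]
      have : (Pp - Pm) (x m) = Pp (x m) - Pm (x m) := rfl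
      rwa [this] at hLb
    have hx0eq : P0 (x m) = x m + (-1 : ℝ) • (Pp (x m) + Pm (x m)) := by
      rw [neg_one_smul, ← sub_eq_add_neg]
      exact eq_sub_of_add_eq' hdecomp
    have hν0 : ν (P0 (x m)) ≤ c + C * D := by
      calc ν (P0 (x m)) = ν (x m + (-1 : ℝ) • (Pp (x m) + Pm (x m))) := by rw [hx0eq]
        _ ≤ ν (x m) + ν ((-1 : ℝ) • (Pp (x m) + Pm (x m))) := hν_add _ _
        _ = ν (x m) + ν (Pp (x m) + Pm (x m)) := by rw [hν_smul]; simp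
        _ ≤ c + C * ‖Pp (x m) + Pm (x m)‖ := add_le_add hνle (hCle _)
        _ ≤ c + C * D := by nlinarith
    have hx0norm : ‖P0 (x m)‖ ≤ C' * (c + C * D) := by
      have hmem : P0 (x m) ∈ LinearMap.range (P0 : E →ₗ[ℝ] E) := ⟨x m, rfl⟩
      calc ‖P0 (x m)‖ ≤ C' * ν (P0 (x m)) := hC'le _ hmem
        _ ≤ C' * (c + C * D) := by nlinarith
    have : ‖x m‖ ≤ D + C' * (c + C * D) := by
      calc ‖x m‖ = ‖(Pp (x m) + Pm (x m)) + P0 (x m)‖ := by rw [hdecomp]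
        _ ≤ ‖Pp (x m) + Pm (x m)‖ + ‖P0 (x m)‖ := norm_add_le _ _
        _ ≤ D + C' * (c + C * D) := add_le_add hsumsub hx0norm
    exact le_trans this (le_max_right _ _)
  · -- endpoint case
    have hun : lam m ∈ Set.Icc lam0 (lam0 + ε) ∪ Set.Icc (lam0 + 1 - ε) (lam0 + 1) := by
      obtain ⟨h1, h2⟩ := hlam m
      rw [Set.mem_Ioo] at hmid
      push_neg at hmid
      by_cases h : lam0 + ε < lam m
      · exact Or.inr ⟨hmid h, h2⟩
      · exact Or.inl ⟨h1, le_of_not_gt h⟩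
    by_cases hx0 : x m = 0
    · rw [hx0, norm_zero]
      exact le_max_of_le_left (div_nonneg hMT0 hε0.le)
    · have hr : 0 < ‖x m‖ := norm_pos_iff.mpr hx0
      set u : E := ‖x m‖⁻¹ • x m with hu
      have hu1 : ‖u‖ = 1 := by
        rw [hu, norm_smul, norm_inv, norm_norm, inv_mul_cancel₀ hr.ne']
      have hre : x m = ‖x m‖ • u := by
        rw [hu, smul_inv_smul₀ hr.ne']
      have hTeq : T (s m) (x m) (lam m) = ‖x m‖ • T (s m) u (lam m) := by
        conv_lhs => rw [hre]
        exact hThom _ (hs m) _ (hlam m) _ hr.le u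
      have hTu : ε < ‖T (s m) u (lam m)‖ := hTend _ (hs m) _ hun u hu1
      have hTnorm : ‖x m‖ * ε ≤ MT := by
        have : ‖x m‖ * ε ≤ ‖x m‖ * ‖T (s m) u (lam m)‖ := by nlinarith
        calc ‖x m‖ * ε ≤ ‖x m‖ * ‖T (s m) u (lam m)‖ := this
          _ = ‖T (s m) (x m) (lam m)‖ := by
              rw [hTeq, norm_smul, norm_norm]
          _ ≤ MT := hMT m
      have : ‖x m‖ ≤ MT / ε := by
        rw [le_div_iff₀ hε0]
        exact hTnorm
      exact le_trans this (le_max_left _ _)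
end
end

section
/- Let H : ℝ × ℂ^{n+1} → ℝ be continuously differentiable in the second variable and S¹-invariant in x. For λ ∈ ℝ and a differentiable curve x : ℝ → ℂ^{n+1}, define F_λ(x)(t) := −i·ẋ(t) − ∇ₓH(t, x(t)) + 2πλ·x(t), and define the shifted curve (Sh x)(t) := e^{2πit}·x(t). Then for every differentiable x : ℝ → ℂ^{n+1}, every λ ∈ ℝ and every t ∈ ℝ: F_λ(Sh x)(t) = e^{2πit}·F_{λ+1}(x)(t); equivalently, F_{λ+1}(x) = Sh^{-1}(F_λ(Sh x)). -/
noncomputable section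

open Real

/-- The twisted Hamiltonian vector field `F_λ(x)(t) = −i·ẋ(t) − ∇ₓH(t,x(t)) + 2πλ·x(t)`. -/
def Ftwist (n : ℕ) (G : ℝ → EucC n → EucC n) (lam : ℝ) (x : ℝ → EucC n) : ℝ → EucC n :=
  fun t => (-Complex.I) • deriv x t - G t (x t) + ((2 * Real.pi * lam : ℝ)) • x t

/-- The shift operator `(Sh x)(t) = e^{2πit} x(t)`. -/
def Sh (n : ℕ) (x : ℝ → EucC n) : ℝ → EucC n :=
  fun t => Complex.exp (((2 * Real.pi * t : ℝ) : ℂ) * Complex.I) • x t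

/-- Real inner product on `EucC n` is the real part of the complex one. -/
lemma rinner_eq (n : ℕ) (a b : EucC n) : (inner ℝ a b : ℝ) = (inner ℂ a b : ℂ).re := by
  simp [PiLp.inner_apply, Complex.re_sum]

/-- The gradient of an `S¹`-invariant function is `S¹`-equivariant. -/
lemma grad_equivariant (n : ℕ) (H : ℝ → EucC n → ℝ) (G : ℝ → EucC n → EucC n)
    (hgrad : ∀ t x, HasGradientAt (fun y => H t y) (G t x) x)
    (hinv : ∀ t (θ : ℝ) x, H t (Complex.exp ((θ : ℂ) * Complex.I) • x) = H t x)
    (t θ : ℝ) (y : EucC n) :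
    G t (Complex.exp ((θ : ℂ) * Complex.I) • y)
      = Complex.exp ((θ : ℂ) * Complex.I) • G t y := by
  set c : ℂ := Complex.exp ((θ : ℂ) * Complex.I) with hc
  have hcc : c * (starRingEnd ℂ) c = 1 := by
    rw [hc, ← Complex.exp_conj, ← Complex.exp_add]
    simp [map_mul, Complex.conj_I]
  have hL : HasFDerivAt (fun v : EucC n => c • v)
      ((c • ContinuousLinearMap.id ℂ (EucC n)).restrictScalars ℝ) y :=
    ((c • ContinuousLinearMap.id ℂ (EucC n)).restrictScalars ℝ).hasFDerivAt
  have hF : HasFDerivAt (fun v => H t v)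
      (InnerProductSpace.toDual ℝ (EucC n) (G t (c • y))) (c • y) :=
    (hgrad t (c • y)).hasFDerivAt
  have hcomp := hF.comp y hL
  have heq : (fun v : EucC n => H t (c • v)) = fun v => H t v := by
    funext v; exact hinv t θ v
  rw [show ((fun v => H t v) ∘ fun v : EucC n => c • v) = fun v => H t v from heq] at hcomp
  have hF2 : HasFDerivAt (fun v => H t v)
      (InnerProductSpace.toDual ℝ (EucC n) (G t y)) y :=
    (hgrad t y).hasFDerivAt
  have hdual := hF2.unique hcomp
  have hkey : G t y = (starRingEnd ℂ) c • G t (c • y) := by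
    apply (InnerProductSpace.toDual ℝ (EucC n)).injective
    rw [hdual]
    ext v
    simp only [InnerProductSpace.toDual_apply_apply, ContinuousLinearMap.coe_comp',
      Function.comp_apply, ContinuousLinearMap.coe_restrictScalars',
      ContinuousLinearMap.smul_apply, ContinuousLinearMap.coe_id', id_eq]
    rw [rinner_eq, rinner_eq, inner_smul_right, inner_smul_left]
    simp
  rw [hkey, smul_smul, hcc, one_smul]

/-- Derivative of the shifted curve. -/
lemma hasDerivAt_Sh (n : ℕ) (x : ℝ → EucC n) (t : ℝ) (hx : DifferentiableAt ℝ x t) :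
    HasDerivAt (Sh n x)
      (Complex.exp (((2 * π * t : ℝ) : ℂ) * Complex.I) • deriv x t +
        ((2 * π : ℂ) * Complex.I * Complex.exp (((2 * π * t : ℝ) : ℂ) * Complex.I)) • x t) t := by
  have h0 : HasDerivAt (fun s : ℝ => (((2 * π * s : ℝ) : ℂ) * Complex.I))
      ((2 * π : ℂ) * Complex.I) t := by
    have h2 : HasDerivAt (fun s : ℝ => (2 * π : ℂ) * (s : ℂ) * Complex.I)
        ((2 * π : ℂ) * 1 * Complex.I) t :=
      ((Complex.ofRealCLM.hasDerivAt).const_mul _).mul_const _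
    have hfe : (fun s : ℝ => (((2 * π * s : ℝ) : ℂ) * Complex.I))
        = fun s : ℝ => (2 * π : ℂ) * (s : ℂ) * Complex.I := by
      funext s; push_cast; ring
    rw [hfe]; simpa using h2
  have hexp := h0.cexp
  have h3 := hexp.smul (hx.hasDerivAt)
  have h4 : HasDerivAt (fun s : ℝ => Complex.exp (((2 * π * s : ℝ) : ℂ) * Complex.I) • x s)
      (Complex.exp (((2 * π * t : ℝ) : ℂ) * Complex.I) • deriv x t +
        ((2 * π : ℂ) * Complex.I * Complex.exp (((2 * π * t : ℝ) : ℂ) * Complex.I)) • x t) t := by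
    simpa [Complex.ofReal_mul, Complex.ofReal_ofNat, mul_comm, mul_assoc, mul_left_comm] using
      (show HasDerivAt (fun s : ℝ => Complex.exp (((2 * π * s : ℝ) : ℂ) * Complex.I) • x s) _ t from h3)
  exact h4

/-- The shift-conjugation identity `F_{λ+1} = Sh⁻¹ ∘ F_λ ∘ Sh` from Step 1 of the proof of
the main theorem: `F_λ(Sh x)(t) = e^{2πit} F_{λ+1}(x)(t)`. -/
theorem Ftwist_shift_conjugation (n : ℕ)
    (H : ℝ → EucC n → ℝ) (G : ℝ → EucC n → EucC n)
    -- `H` is continuously differentiable in the second variable, with gradient `G`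
    (hgrad : ∀ t x, HasGradientAt (fun y => H t y) (G t x) x)
    (hGcont : ∀ t, Continuous fun x => G t x)
    -- `H` is `S¹`-invariant in `x`
    (hinv : ∀ t (θ : ℝ) x, H t (Complex.exp ((θ : ℂ) * Complex.I) • x) = H t x)
    (x : ℝ → EucC n) (hx : ∀ t, DifferentiableAt ℝ x t) (lam : ℝ) :
    ∀ t, Ftwist n G lam (Sh n x) t =
        Complex.exp (((2 * π * t : ℝ) : ℂ) * Complex.I) • Ftwist n G (lam + 1) x t ∧
      Ftwist n G (lam + 1) x t =
        Complex.exp (((-(2 * π * t) : ℝ) : ℂ) * Complex.I) • Ftwist n G lam (Sh n x) t := by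
  intro t
  set e : ℂ := Complex.exp (((2 * π * t : ℝ) : ℂ) * Complex.I) with he
  have hd : deriv (Sh n x) t = e • deriv x t + ((2 * π : ℂ) * Complex.I * e) • x t :=
    (hasDerivAt_Sh n x t (hx t)).deriv
  have hG : G t (Sh n x t) = e • G t (x t) := by
    have := grad_equivariant n H G hgrad hinv t (2 * π * t) (x t)
    simpa [Sh, he] using this
  have hSh : Sh n x t = e • x t := rfl
  have h1 : Ftwist n G lam (Sh n x) t = e • Ftwist n G (lam + 1) x t := by
    unfold Ftwist
    rw [hd, hG, hSh]
    match_scalars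
    all_goals try simp only [Complex.coe_algebraMap]
    all_goals push_cast
    all_goals ring_nf
    all_goals try rw [Complex.I_sq]
    all_goals try ring_nf
  refine ⟨h1, ?_⟩
  rw [h1, smul_smul, ← Complex.exp_add]
  have : ((-(2 * π * t) : ℝ) : ℂ) * Complex.I + ((2 * π * t : ℝ) : ℂ) * Complex.I = 0 := by
    push_cast; ring
  rw [this, Complex.exp_zero, one_smul]
end
end

section
/- Let H : ℝ × ℂ^{n+1} → ℝ be continuously differentiable in the second variable, S¹-invariant in x and positively 2-homogeneous in x. Let λ₀ ∈ ℝ and ε ∈ (0, 1/2) be such that for every μ ∈ [λ₀, λ₀ + ε] ∪ [λ₀ + 1 − ε, λ₀ + 1], the only differentiable 1-periodic solution of ẏ(t) = i·(∇ₓH(t, y(t)) − 2πμ·y(t)) is y ≡ 0. Let χ : ℝ → ℝ be smooth with χ(λ₀) = λ₀, χ(λ₀+1) = λ₀+1, χ(λ) = λ on (λ₀ + ε, λ₀ + 1 − ε), χ' > 0 on (λ₀, λ₀ + 1), and χ' = 0 on (−∞, λ₀] ∪ [λ₀ + 1, +∞). Then for every differentiable 1-periodic curve x : ℝ → ℂ^{n+1}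 and every λ ∈ ℝ, the following are equivalent: (i) ẋ(t) = i·(∇ₓH(t, x(t)) − 2πχ(λ)·x(t)) for all t and χ'(λ)·∫₀¹ |x(t)|² dt = 1; (ii) λ ∈ (λ₀, λ₀ + 1), ẋ(t) = i·(∇ₓH(t, x(t)) − 2πλ·x(t)) for all t, and ∫₀¹ |x(t)|² dt = 1. -/
noncomputable section

open Real

/-- Lemma 6 of the paper, at the level of classical solutions: the critical point equation
of the modified action functional (with the cut-off `χ`) is equivalent to the normalized
`λ`-twisted Hamiltonian equation with `λ ∈ (λ₀, λ₀+1)`. -/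
theorem critical_point_iff_normalized_twisted (n : ℕ)
    (H : ℝ → EucC n → ℝ) (G : ℝ → EucC n → EucC n)
    -- `H` is continuously differentiable in the second variable, with gradient `G`
    (hgrad : ∀ t x, HasGradientAt (fun y => H t y) (G t x) x)
    (hGcont : ∀ t, Continuous fun x => G t x)
    -- `H` is `S¹`-invariant in `x`
    (hinv : ∀ t (θ : ℝ) x, H t (Complex.exp ((θ : ℂ) * Complex.I) • x) = H t x)
    -- `H` is positively 2-homogeneous in `x`
    (hhom : ∀ t (r : ℝ), 0 ≤ r → ∀ x, H t (r • x) = r ^ 2 * H t x)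
    (lam0 ε : ℝ) (hε : ε ∈ Set.Ioo (0 : ℝ) (1 / 2))
    -- for `μ` in the endpoint regions the only 1-periodic solution is `y ≡ 0`
    (hend : ∀ μ ∈ Set.Icc lam0 (lam0 + ε) ∪ Set.Icc (lam0 + 1 - ε) (lam0 + 1),
      ∀ y : ℝ → EucC n, (∀ t, DifferentiableAt ℝ y t) → (∀ t, y (t + 1) = y t) →
        (∀ t, deriv y t = Complex.I • (G t (y t) - ((2 * π * μ : ℝ)) • y t)) →
        ∀ t, y t = 0)
    -- the cut-off function `χ` with properties (χ.0)–(χ.3)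
    (χ : ℝ → ℝ) (hχ : ContDiff ℝ (⊤ : ℕ∞) χ)
    (hχ0 : χ lam0 = lam0) (hχ0' : χ (lam0 + 1) = lam0 + 1)
    (hχ1 : ∀ lam ∈ Set.Ioo (lam0 + ε) (lam0 + 1 - ε), χ lam = lam)
    (hχ2 : ∀ lam ∈ Set.Ioo lam0 (lam0 + 1), 0 < deriv χ lam)
    (hχ3 : ∀ lam : ℝ, lam ≤ lam0 ∨ lam0 + 1 ≤ lam → deriv χ lam = 0)
    -- the curve and the parameter
    (x : ℝ → EucC n) (hx : ∀ t, DifferentiableAt ℝ x t) (hxper : ∀ t, x (t + 1) = x t)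
    (lam : ℝ) :
    ((∀ t, deriv x t = Complex.I • (G t (x t) - ((2 * π * χ lam : ℝ)) • x t)) ∧
      deriv χ lam * ∫ t in (0 : ℝ)..1, ‖x t‖ ^ 2 = 1) ↔
    (lam ∈ Set.Ioo lam0 (lam0 + 1) ∧
      (∀ t, deriv x t = Complex.I • (G t (x t) - ((2 * π * lam : ℝ)) • x t)) ∧
      ∫ t in (0 : ℝ)..1, ‖x t‖ ^ 2 = 1) := by
  obtain ⟨hε0, hε2⟩ := hε
  have hεlt : lam0 + ε < lam0 + 1 - ε := by linarith
  have hdiff : Differentiable ℝ χ := hχ.differentiable (by simp)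
  have hmono : Monotone χ := by
    apply monotone_of_deriv_nonneg hdiff
    intro t
    rcases le_or_gt t lam0 with h | h
    · rw [hχ3 t (Or.inl h)]
    · rcases le_or_gt (lam0 + 1) t with h' | h'
      · rw [hχ3 t (Or.inr h')]
      · exact (hχ2 t ⟨h, h'⟩).le
  have hcl : Set.EqOn χ id (Set.Icc (lam0 + ε) (lam0 + 1 - ε)) := by
    have h1 : Set.EqOn χ id (Set.Ioo (lam0 + ε) (lam0 + 1 - ε)) := fun t ht => hχ1 t ht
    have := h1.closure hχ.continuous continuous_id
    rwa [closure_Ioo hεlt.ne] at this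
  have hd1 : ∀ l ∈ Set.Ioo (lam0 + ε) (lam0 + 1 - ε), deriv χ l = 1 := by
    intro l hl
    have hev : χ =ᶠ[nhds l] id :=
      Filter.eventuallyEq_of_mem (isOpen_Ioo.mem_nhds hl) (fun t ht => hχ1 t ht)
    rw [hev.deriv_eq, deriv_id]
  have hzero : ∀ μ ∈ Set.Icc lam0 (lam0 + ε) ∪ Set.Icc (lam0 + 1 - ε) (lam0 + 1),
      (∀ t, deriv x t = Complex.I • (G t (x t) - ((2 * π * μ : ℝ)) • x t)) →
      (∫ t in (0 : ℝ)..1, ‖x t‖ ^ 2) = 0 := by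
    intro μ hμ heq
    have h0 := hend μ hμ x hx hxper heq
    simp [h0]
  constructor
  · rintro ⟨heq, hnorm⟩
    have hne : deriv χ lam ≠ 0 := by
      intro h; rw [h, zero_mul] at hnorm; exact zero_ne_one hnorm
    have hl1 : lam0 < lam := by
      by_contra h; exact hne (hχ3 lam (Or.inl (not_lt.mp h)))
    have hl2 : lam < lam0 + 1 := by
      by_contra h; exact hne (hχ3 lam (Or.inr (not_lt.mp h)))
    rcases le_or_gt lam (lam0 + ε) with h2 | h2
    · exfalso
      have hμ : χ lam ∈ Set.Icc lam0 (lam0 + ε) := by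
        constructor
        · rw [← hχ0]; exact hmono hl1.le
        · have h := hmono h2
          rwa [hcl (Set.left_mem_Icc.mpr hεlt.le)] at h
      have h0 := hzero (χ lam) (Or.inl hμ) heq
      rw [h0, mul_zero] at hnorm; exact zero_ne_one hnorm
    rcases le_or_gt (lam0 + 1 - ε) lam with h3 | h3
    · exfalso
      have hμ : χ lam ∈ Set.Icc (lam0 + 1 - ε) (lam0 + 1) := by
        constructor
        · have h := hmono h3
          rwa [hcl (Set.right_mem_Icc.mpr hεlt.le)] at h
        · rw [← hχ0']; exact hmono hl2.le
      have h0 := hzero (χ lam) (Or.inr hμ) heq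
      rw [h0, mul_zero] at hnorm; exact zero_ne_one hnorm
    · have hm : lam ∈ Set.Ioo (lam0 + ε) (lam0 + 1 - ε) := ⟨h2, h3⟩
      refine ⟨⟨hl1, hl2⟩, ?_, ?_⟩
      · intro t
        have := heq t
        rwa [hχ1 lam hm] at this
      · rwa [hd1 lam hm, one_mul] at hnorm
  · rintro ⟨hlam, heq, hnorm⟩
    rcases le_or_gt lam (lam0 + ε) with h2 | h2
    · exfalso
      have h0 := hzero lam (Or.inl ⟨hlam.1.le, h2⟩) heq
      rw [h0] at hnorm; exact zero_ne_one hnorm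
    rcases le_or_gt (lam0 + 1 - ε) lam with h3 | h3
    · exfalso
      have h0 := hzero lam (Or.inr ⟨h3, hlam.2.le⟩) heq
      rw [h0] at hnorm; exact zero_ne_one hnorm
    · have hm : lam ∈ Set.Ioo (lam0 + ε) (lam0 + 1 - ε) := ⟨h2, h3⟩
      refine ⟨?_, ?_⟩
      · intro t; rw [hχ1 lam hm]; exact heq t
      · rw [hd1 lam hm, one_mul]; exact hnorm
end
end

section
/- Let H : ℝ × ℂ^{n+1} → ℝ be continuously differentiable in the second variable with ∇ₓH continuous on ℝ × ℂ^{n+1}, 1-periodic in t, S¹-invariant in x and positively 2-homogeneous in x. If λ₀ ∈ ℝ is such that the only differentiable 1-periodic solution of ẏ(t) = i·(∇ₓH(t, y(t)) − 2πλ₀·y(t)) is y ≡ 0, then there exists ε > 0 such that for every λ ∈ (λ₀ − ε, λ₀ + ε) the only differentiable 1-periodic solution of ẏ(t) = i·(∇ₓH(t, y(t)) − 2πλ·y(t)) is y ≡ 0. -/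
noncomputable section

open Real

/-! ### Auxiliary lemmas -/

/-- The unit interval as a type, domain for Arzelà–Ascoli. -/
abbrev IccX := ↥(Set.Icc (0:ℝ) 1)

instance (n : ℕ) : MeasurableSpace (EucC n) := borel _
instance (n : ℕ) : BorelSpace (EucC n) := ⟨rfl⟩

lemma periodic_eval {E : Type*} (y : ℝ → E) (h : ∀ t, y (t + 1) = y t) (t : ℝ) :
    y t = y (Int.fract t) := by
  have hp : Function.Periodic y 1 := h
  have := hp.sub_int_mul_eq (x := t) ⌊t⌋
  simp only [mul_one] at this
  rw [Int.fract]
  exact this.symm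

lemma grad_homog {n : ℕ} (H : ℝ → EucC n → ℝ) (G : ℝ → EucC n → EucC n)
    (hgrad : ∀ t x, HasGradientAt (fun y => H t y) (G t x) x)
    (hhom : ∀ t (r : ℝ), 0 ≤ r → ∀ x, H t (r • x) = r ^ 2 * H t x)
    (t : ℝ) (r : ℝ) (hr : 0 < r) (x : EucC n) : G t (r • x) = r • G t x := by
  set D := InnerProductSpace.toDual ℝ (EucC n)
  have hlin : HasFDerivAt (fun y : EucC n => r • y)
      (r • ContinuousLinearMap.id ℝ (EucC n)) x := by
    exact (hasFDerivAt_id x).const_smul r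
  have h1 : HasFDerivAt (fun y : EucC n => H t (r • y))
      ((D (G t (r • x))).comp (r • ContinuousLinearMap.id ℝ (EucC n))) x := by
    have hout := (hgrad t (r • x)).hasFDerivAt
    exact hout.comp x hlin
  have h2 : HasFDerivAt (fun y : EucC n => H t (r • y))
      ((r ^ 2 : ℝ) • D (G t x)) x := by
    have : (fun y : EucC n => H t (r • y)) = fun y => (r ^ 2) * H t y := by
      funext y; exact hhom t r hr.le y
    rw [this]
    exact (hgrad t x).hasFDerivAt.const_mul _
  have heq := h1.unique h2
  apply ext_inner_right ℝ
  intro v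
  have := congrArg (fun L => L v) heq
  simp only [ContinuousLinearMap.comp_apply, ContinuousLinearMap.smul_apply,
    ContinuousLinearMap.id_apply, InnerProductSpace.toDual_apply_apply, D] at this
  rw [real_inner_smul_left]
  rw [real_inner_smul_right] at this
  have hrne : r ≠ 0 := hr.ne'
  field_simp at this ⊢
  rw [smul_eq_mul] at this
  apply mul_left_cancel₀ hrne
  linear_combination this

lemma grad_periodic {n : ℕ} (H : ℝ → EucC n → ℝ) (G : ℝ → EucC n → EucC n)
    (hgrad : ∀ t x, HasGradientAt (fun y => H t y) (G t x) x)
    (hper : ∀ t x, H (t + 1) x = H t x)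
    (t : ℝ) (x : EucC n) : G t x = G (Int.fract t) x := by
  have key : ∀ s, G (s + 1) x = G s x := by
    intro s
    have h1 := hgrad (s + 1) x
    have : (fun y => H (s + 1) y) = fun y => H s y := funext fun y => hper s y
    rw [this] at h1
    exact h1.unique (hgrad s x)
  exact periodic_eval (fun s => G s x) key t

lemma grad_zero {n : ℕ} (G : ℝ → EucC n → EucC n)
    (hh : ∀ t (r : ℝ), 0 < r → ∀ x, G t (r • x) = r • G t x) (t : ℝ) : G t 0 = 0 := by
  have := hh t 2 (by norm_num) 0
  rw [smul_zero] at this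
  have h2 : ((2:ℝ) - 1) • G t 0 = 0 := by
    rw [sub_smul, one_smul, ← this, sub_self]
  norm_num at h2
  exact h2

lemma grad_bound {n : ℕ} (G : ℝ → EucC n → EucC n)
    (hGcont : Continuous fun p : ℝ × EucC n => G p.1 p.2)
    (hh : ∀ t (r : ℝ), 0 < r → ∀ x, G t (r • x) = r • G t x)
    (hGper : ∀ t x, G t x = G (Int.fract t) x) :
    ∃ C : ℝ, 0 ≤ C ∧ ∀ t x, ‖G t x‖ ≤ C * ‖x‖ := by
  obtain ⟨C₀, hC₀⟩ := (((isCompact_Icc (a := (0:ℝ)) (b := 1)).prod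
      (isCompact_closedBall (0 : EucC n) 1))).exists_bound_of_continuousOn hGcont.continuousOn
  refine ⟨max C₀ 0, le_max_right _ _, fun t x => ?_⟩
  rcases eq_or_ne x 0 with rfl | hx
  · simp [grad_zero G hh]
  · have hxpos : (0:ℝ) < ‖x‖ := norm_pos_iff.mpr hx
    set u : EucC n := ‖x‖⁻¹ • x with hu
    have hxu : x = ‖x‖ • u := by
      rw [hu, smul_smul, mul_inv_cancel₀ hxpos.ne', one_smul]
    have hunorm : ‖u‖ = 1 := by
      rw [hu, norm_smul, norm_inv, norm_norm, inv_mul_cancel₀ hxpos.ne']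
    have hmem : ((Int.fract t, u) : ℝ × EucC n) ∈
        Set.Icc (0:ℝ) 1 ×ˢ Metric.closedBall (0 : EucC n) 1 := by
      constructor
      · exact ⟨Int.fract_nonneg t, (Int.fract_lt_one t).le⟩
      · simpa [Metric.mem_closedBall, dist_eq_norm] using hunorm.le
    have hb := hC₀ _ hmem
    calc ‖G t x‖ = ‖G (Int.fract t) (‖x‖ • u)‖ := by rw [← hxu, ← hGper]
      _ = ‖x‖ * ‖G (Int.fract t) u‖ := by rw [hh _ _ hxpos, norm_smul, norm_norm]
      _ ≤ ‖x‖ * max C₀ 0 := by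
          exact mul_le_mul_of_nonneg_left (hb.trans (le_max_left _ _)) hxpos.le
      _ = max C₀ 0 * ‖x‖ := mul_comm _ _

lemma compact_lipschitz_ball {n : ℕ} (Cnn : NNReal) :
    IsCompact {f : C(IccX, EucC n) |
      LipschitzWith Cnn f ∧ ∀ x, f x ∈ Metric.closedBall (0 : EucC n) 1} := by
  set S := {f : C(IccX, EucC n) |
      LipschitzWith Cnn f ∧ ∀ x, f x ∈ Metric.closedBall (0 : EucC n) 1}
  set T := {g : IccX → EucC n |
      (∀ a b : IccX, dist (g a) (g b) ≤ (Cnn : ℝ) * dist a b) ∧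
      ∀ x, g x ∈ Metric.closedBall (0 : EucC n) 1}
  have hTeq : T = (⋂ (a : IccX) (b : IccX),
        {g : IccX → EucC n | dist (g a) (g b) ≤ (Cnn : ℝ) * dist a b}) ∩
      ⋂ (x : IccX), {g : IccX → EucC n | g x ∈ Metric.closedBall (0 : EucC n) 1} := by
    ext g; simp only [T, Set.mem_inter_iff, Set.mem_iInter, Set.mem_setOf_eq]
  have hTclosed : IsClosed T := by
    rw [hTeq]
    refine IsClosed.inter ?_ ?_
    · exact isClosed_iInter fun a => isClosed_iInter fun b =>
        isClosed_le ((continuous_apply a).dist (continuous_apply b)) continuous_const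
    · exact isClosed_iInter fun x =>
        (Metric.isClosed_closedBall).preimage (continuous_apply x)
  have hTsub : T ⊆ Set.pi Set.univ fun _ : IccX => Metric.closedBall (0 : EucC n) 1 :=
    fun g hg => Set.mem_univ_pi.mpr fun x => hg.2 x
  have hTcompact : IsCompact T :=
    IsCompact.of_isClosed_subset
      (isCompact_univ_pi fun _ => isCompact_closedBall (0 : EucC n) 1) hTclosed hTsub
  have himg : ContinuousMap.toFun '' S = T := by
    apply Set.Subset.antisymm
    · rintro _ ⟨f, hf, rfl⟩
      exact ⟨fun a b => hf.1.dist_le_mul a b, hf.2⟩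
    · intro g hg
      have hlip : LipschitzWith Cnn g := LipschitzWith.of_dist_le_mul hg.1
      exact ⟨⟨g, hlip.continuous⟩, ⟨hlip, hg.2⟩, rfl⟩
  apply ArzelaAscoli.isCompact_of_equicontinuous
  · rw [himg]; exact hTcompact
  · apply Metric.equicontinuous_of_continuity_modulus (fun d => (Cnn : ℝ) * d)
    · have : Filter.Tendsto (fun d : ℝ => (Cnn : ℝ) * d) (nhds 0) (nhds ((Cnn:ℝ) * 0)) :=
        (continuous_const.mul continuous_id).tendsto 0
      simpa using this
    · intro a b f
      exact f.2.1.dist_le_mul a b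

/-- The corollary of Lemma 5 of the paper at the level of classical solutions: the set of
`λ` for which the `λ`-twisted Hamiltonian equation has no nonzero 1-periodic solution is
open. -/
theorem no_nonzero_twisted_solutions_open (n : ℕ)
    (H : ℝ → EucC n → ℝ) (G : ℝ → EucC n → EucC n)
    -- `H` is continuously differentiable in the second variable, with gradient `G`,
    -- and `∇ₓH` is continuous on `ℝ × ℂ^{n+1}`
    (hgrad : ∀ t x, HasGradientAt (fun y => H t y) (G t x) x)
    (hGcont : Continuous fun p : ℝ × EucC n => G p.1 p.2)
    -- `H` is 1-periodic in `t`
    (hper : ∀ t x, H (t + 1) x = H t x)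
    -- `H` is `S¹`-invariant in `x`
    (hinv : ∀ t (θ : ℝ) x, H t (Complex.exp ((θ : ℂ) * Complex.I) • x) = H t x)
    -- `H` is positively 2-homogeneous in `x`
    (hhom : ∀ t (r : ℝ), 0 ≤ r → ∀ x, H t (r • x) = r ^ 2 * H t x)
    (lam0 : ℝ)
    -- the only 1-periodic solution of the `λ₀`-twisted equation is `y ≡ 0`
    (hlam0 : ∀ y : ℝ → EucC n, (∀ t, DifferentiableAt ℝ y t) → (∀ t, y (t + 1) = y t) →
      (∀ t, deriv y t = Complex.I • (G t (y t) - ((2 * π * lam0 : ℝ)) • y t)) →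
      ∀ t, y t = 0) :
    ∃ ε > (0 : ℝ), ∀ lam ∈ Set.Ioo (lam0 - ε) (lam0 + ε),
      ∀ y : ℝ → EucC n, (∀ t, DifferentiableAt ℝ y t) → (∀ t, y (t + 1) = y t) →
        (∀ t, deriv y t = Complex.I • (G t (y t) - ((2 * π * lam : ℝ)) • y t)) →
        ∀ t, y t = 0 := by
  classical
  have hGhom : ∀ t (r : ℝ), 0 < r → ∀ x, G t (r • x) = r • G t x :=
    fun t r hr x => grad_homog H G hgrad hhom t r hr x
  have hGper : ∀ t x, G t x = G (Int.fract t) x := grad_periodic H G hgrad hper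
  obtain ⟨C₁, hC₁0, hC₁⟩ := grad_bound G hGcont hGhom hGper
  have hπ : (0:ℝ) < π := pi_pos
  set C : ℝ := C₁ + 2 * π * (|lam0| + 1) with hCdef
  have hC0 : 0 ≤ C := by positivity
  -- the key norm bound
  have hkey : ∀ (s l : ℝ) (v : EucC n), |l| ≤ |lam0| + 1 → ‖v‖ ≤ 1 →
      ‖Complex.I • (G s v - ((2 * π * l : ℝ)) • v)‖ ≤ C := by
    intro s l v hl hv
    rw [norm_smul, Complex.norm_I, one_mul]
    have h1 : ‖G s v - (2 * π * l : ℝ) • v‖ ≤ ‖G s v‖ + ‖(2 * π * l : ℝ) • v‖ :=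
      norm_sub_le _ _
    have h2 : ‖G s v‖ ≤ C₁ := by
      calc ‖G s v‖ ≤ C₁ * ‖v‖ := hC₁ s v
        _ ≤ C₁ * 1 := mul_le_mul_of_nonneg_left hv hC₁0
        _ = C₁ := mul_one _
    have h3 : ‖(2 * π * l : ℝ) • v‖ ≤ 2 * π * (|lam0| + 1) := by
      rw [norm_smul, Real.norm_eq_abs]
      calc |2 * π * l| * ‖v‖ ≤ |2 * π * l| * 1 :=
            mul_le_mul_of_nonneg_left hv (abs_nonneg _)
        _ = |2 * π| * |l| := by rw [mul_one, abs_mul]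
        _ = 2 * π * |l| := by rw [abs_of_pos (by positivity)]
        _ ≤ 2 * π * (|lam0| + 1) := by
            exact mul_le_mul_of_nonneg_left hl (by positivity)
    calc ‖G s v - (2 * π * l : ℝ) • v‖ ≤ ‖G s v‖ + ‖(2 * π * l : ℝ) • v‖ := h1
      _ ≤ C₁ + 2 * π * (|lam0| + 1) := add_le_add h2 h3
      _ = C := hCdef.symm
  by_contra hcon
  push_neg at hcon
  have hstep : ∀ k : ℕ, ∃ lam ∈ Set.Ioo (lam0 - ((k:ℝ)+1)⁻¹) (lam0 + ((k:ℝ)+1)⁻¹),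
      ∃ y : ℝ → EucC n, (∀ t, DifferentiableAt ℝ y t) ∧ (∀ t, y (t + 1) = y t) ∧
        (∀ t, deriv y t = Complex.I • (G t (y t) - ((2 * π * lam : ℝ)) • y t)) ∧
        ∃ t, y t ≠ 0 :=
    fun k => hcon _ (by positivity)
  choose lam hlam y hdiff hperi heqn hne using hstep
  -- the sequence `lam` converges to `lam0` and is uniformly bounded
  have hinvk : ∀ k : ℕ, ((k:ℝ)+1)⁻¹ ≤ 1 := by
    intro k
    rw [inv_le_one_iff₀]
    right; linarith [Nat.cast_nonneg (α := ℝ) k]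
  have hlamdist : ∀ k, |lam k - lam0| ≤ ((k:ℝ)+1)⁻¹ := by
    intro k
    obtain ⟨h1, h2⟩ := hlam k
    rw [abs_le]; constructor <;> linarith
  have hlamabs : ∀ k, |lam k| ≤ |lam0| + 1 := by
    intro k
    calc |lam k| = |lam0 + (lam k - lam0)| := by ring_nf
      _ ≤ |lam0| + |lam k - lam0| := abs_add_le _ _
      _ ≤ |lam0| + 1 := add_le_add le_rfl ((hlamdist k).trans (hinvk k))
  have hlamtend : Filter.Tendsto lam Filter.atTop (nhds lam0) := by
    rw [tendsto_iff_dist_tendsto_zero]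
    have hb : Filter.Tendsto (fun k : ℕ => ((k:ℝ)+1)⁻¹) Filter.atTop (nhds 0) := by
      simpa [one_div] using (tendsto_one_div_add_atTop_nhds_zero_nat :
        Filter.Tendsto (fun n : ℕ => 1 / ((n : ℝ) + 1)) Filter.atTop (nhds 0))
    exact squeeze_zero (fun k => dist_nonneg)
      (fun k => by rw [Real.dist_eq]; exact hlamdist k) hb
  -- basic facts about the solutions
  have hycont : ∀ k, Continuous (y k) :=
    fun k => continuous_iff_continuousAt.mpr fun t => (hdiff k t).continuousAt
  have hyfract : ∀ k t, y k t = y k (Int.fract t) :=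
    fun k t => periodic_eval (y k) (hperi k) t
  have hmax : ∀ k, ∃ s ∈ Set.Icc (0:ℝ) 1, IsMaxOn (fun t => ‖y k t‖) (Set.Icc 0 1) s :=
    fun k => isCompact_Icc.exists_isMaxOn ⟨0, by norm_num⟩
      ((continuous_norm.comp (hycont k)).continuousOn)
  choose σ hσmem hσmax using hmax
  set M : ℕ → ℝ := fun k => ‖y k (σ k)‖ with hM
  have hMmax : ∀ k t, ‖y k t‖ ≤ M k := by
    intro k t
    rw [hyfract k t]
    exact hσmax k ⟨Int.fract_nonneg t, (Int.fract_lt_one t).le⟩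
  have hMpos : ∀ k, 0 < M k := by
    intro k
    obtain ⟨t0, ht0⟩ := hne k
    exact (norm_pos_iff.mpr ht0).trans_le (hMmax k t0)
  -- normalized solutions
  set z : ℕ → ℝ → EucC n := fun k t => (M k)⁻¹ • y k t with hz
  have hzdiff : ∀ k t, DifferentiableAt ℝ (z k) t := fun k t => by
    have := (hdiff k t).const_smul (M k)⁻¹; exact this
  have hzcont : ∀ k, Continuous (z k) := fun k => by
    have := (hycont k).const_smul (M k)⁻¹; exact this
  have hzper : ∀ k t, z k (t + 1) = z k t := by
    intro k t; simp only [z]; rw [hperi k t]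
  have hzfract : ∀ k t, z k t = z k (Int.fract t) :=
    fun k t => periodic_eval (z k) (hzper k) t
  have hznorm : ∀ k t, ‖z k t‖ ≤ 1 := by
    intro k t
    simp only [z]
    rw [norm_smul, norm_inv, Real.norm_eq_abs, abs_of_pos (hMpos k), inv_mul_eq_div]
    rw [div_le_one (hMpos k)]
    exact hMmax k t
  have hzderiv : ∀ k t, deriv (z k) t =
      Complex.I • (G t (z k t) - ((2 * π * lam k : ℝ)) • z k t) := by
    intro k t
    have h1 : deriv (z k) t = (M k)⁻¹ • deriv (y k) t := by
      have := deriv_const_smul (M k)⁻¹ (hdiff k t); exact this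
    rw [h1, heqn k t]
    simp only [z]
    rw [hGhom t _ (inv_pos.mpr (hMpos k)) (y k t)]
    rw [smul_comm ((2 * π * lam k : ℝ)) ((M k)⁻¹) (y k t)]
    rw [← smul_sub ((M k)⁻¹)]
    rw [smul_comm Complex.I ((M k)⁻¹)]
  have hzderiv_bound : ∀ k t, ‖deriv (z k) t‖ ≤ C := by
    intro k t
    rw [hzderiv k t]
    exact hkey t (lam k) (z k t) (hlamabs k) (hznorm k t)
  -- uniform Lipschitz bound
  set Cnn : NNReal := ⟨C, hC0⟩ with hCnn
  have hzlip : ∀ k, LipschitzWith Cnn (z k) := by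
    intro k
    apply lipschitzWith_of_nnnorm_deriv_le (fun t => hzdiff k t)
    intro t
    rw [← NNReal.coe_le_coe, coe_nnnorm]
    exact hzderiv_bound k t
  -- the associated continuous maps on `[0,1]`
  set F : ℕ → C(IccX, EucC n) :=
    fun k => ⟨fun x => z k x, (hzcont k).comp continuous_subtype_val⟩ with hF
  have hFS : ∀ k, F k ∈ {f : C(IccX, EucC n) |
      LipschitzWith Cnn f ∧ ∀ x, f x ∈ Metric.closedBall (0 : EucC n) 1} := by
    intro k
    constructor
    · have := (hzlip k).comp (LipschitzWith.subtype_val (Set.Icc (0:ℝ) 1))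
      rw [mul_one] at this
      exact this
    · intro x
      rw [Metric.mem_closedBall, dist_zero_right]
      exact hznorm k x
  obtain ⟨flim, hflimS, φ, hφ, hφtend⟩ :=
    (compact_lipschitz_ball (n := n) Cnn).tendsto_subseq hFS
  -- the limit function
  have hfr : ∀ t : ℝ, Int.fract t ∈ Set.Icc (0:ℝ) 1 :=
    fun t => ⟨Int.fract_nonneg t, (Int.fract_lt_one t).le⟩
  set Y : ℝ → EucC n := fun t => flim ⟨Int.fract t, hfr t⟩ with hY
  have heval : ∀ x : IccX,
      Filter.Tendsto (fun j => F (φ j) x) Filter.atTop (nhds (flim x)) :=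
    fun x => ((continuous_eval_const x).tendsto flim).comp hφtend
  have hpt : ∀ t, Filter.Tendsto (fun j => z (φ j) t) Filter.atTop (nhds (Y t)) := by
    intro t
    have hxx : ∀ j, F (φ j) ⟨Int.fract t, hfr t⟩ = z (φ j) t := by
      intro j
      show z (φ j) (Int.fract t) = z (φ j) t
      exact (hzfract (φ j) t).symm
    exact (heval ⟨Int.fract t, hfr t⟩).congr hxx
  have hYnorm : ∀ t, ‖Y t‖ ≤ 1 := by
    intro t
    have := hflimS.2 ⟨Int.fract t, hfr t⟩
    rwa [Metric.mem_closedBall, dist_zero_right] at this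
  have hYper : ∀ t, Y (t + 1) = Y t := by
    intro t
    simp only [Y]
    congr 1
    exact Subtype.ext (Int.fract_add_one t)
  -- integral identity for the normalized solutions
  set g : ℕ → ℝ → EucC n :=
    fun k s => Complex.I • (G s (z k s) - ((2 * π * lam k : ℝ)) • z k s) with hg
  have hgcont : ∀ k, Continuous (g k) := by
    intro k
    exact ((hGcont.comp (continuous_id.prodMk (hzcont k))).sub
      ((hzcont k).const_smul ((2 * π * lam k : ℝ)))).const_smul Complex.I
  have hgbound : ∀ k s, ‖g k s‖ ≤ C :=
    fun k s => hkey s (lam k) (z k s) (hlamabs k) (hznorm k s)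
  have hint_z : ∀ k (a b : ℝ), z k b - z k a = ∫ s in a..b, g k s := by
    intro k a b
    have hde : deriv (z k) = g k := funext (hzderiv k)
    rw [← intervalIntegral.integral_deriv_eq_sub (fun t _ => hzdiff k t)
      (by rw [hde]; exact (hgcont k).intervalIntegrable a b)]
    apply intervalIntegral.integral_congr
    intro s _
    exact hzderiv k s
  -- the limit equation, in integral form
  set g0 : ℝ → EucC n :=
    fun s => Complex.I • (G s (Y s) - ((2 * π * lam0 : ℝ)) • Y s) with hg0
  have hg0bound : ∀ s, ‖g0 s‖ ≤ C :=
    fun s => hkey s lam0 (Y s) (by linarith [abs_nonneg lam0]) (hYnorm s)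
  have hYmeas : Measurable Y := by
    have h1 : Measurable fun t : ℝ => (⟨Int.fract t, hfr t⟩ : IccX) :=
      measurable_fract.subtype_mk
    exact (map_continuous flim).measurable.comp h1
  have hg0meas : Measurable g0 := by
    have h2 : Measurable fun s => G s (Y s) :=
      hGcont.measurable.comp (measurable_id.prodMk hYmeas)
    exact (h2.sub (hYmeas.const_smul ((2 * π * lam0 : ℝ)))).const_smul Complex.I
  have hg0int : ∀ a b : ℝ, IntervalIntegrable g0 MeasureTheory.volume a b := by
    intro a b
    apply IntervalIntegrable.mono_fun' (g := fun _ => C) intervalIntegrable_const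
      hg0meas.aestronglyMeasurable
    exact MeasureTheory.ae_of_all _ fun s => hg0bound s
  have hYint : ∀ a b : ℝ, Y b - Y a = ∫ s in a..b, g0 s := by
    intro a b
    have hconv : Filter.Tendsto (fun j => ∫ s in a..b, g (φ j) s) Filter.atTop
        (nhds (∫ s in a..b, g0 s)) := by
      apply intervalIntegral.tendsto_integral_filter_of_dominated_convergence (fun _ => C)
      · exact Filter.Eventually.of_forall fun j => (hgcont (φ j)).aestronglyMeasurable
      · exact Filter.Eventually.of_forall fun j =>
          MeasureTheory.ae_of_all _ fun s _ => hgbound (φ j) s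
      · exact intervalIntegrable_const
      · apply MeasureTheory.ae_of_all
        intro s _
        have h1 : Filter.Tendsto (fun j => ((s : ℝ), z (φ j) s)) Filter.atTop
            (nhds (s, Y s)) := tendsto_const_nhds.prodMk_nhds (hpt s)
        have h2 : Filter.Tendsto (fun j => G s (z (φ j) s)) Filter.atTop
            (nhds (G s (Y s))) := (hGcont.tendsto (s, Y s)).comp h1
        have h3 : Filter.Tendsto (fun j => lam (φ j)) Filter.atTop (nhds lam0) :=
          hlamtend.comp hφ.tendsto_atTop
        have h4 : Filter.Tendsto (fun j => (2 * π * lam (φ j) : ℝ)) Filter.atTop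
            (nhds (2 * π * lam0)) := tendsto_const_nhds.mul h3
        have h5 : Filter.Tendsto (fun j => ((2 * π * lam (φ j) : ℝ)) • z (φ j) s)
            Filter.atTop (nhds ((2 * π * lam0 : ℝ) • Y s)) := h4.smul (hpt s)
        exact ((h2.sub h5).const_smul Complex.I)
    have hlhs : Filter.Tendsto (fun j => z (φ j) b - z (φ j) a) Filter.atTop
        (nhds (Y b - Y a)) := (hpt b).sub (hpt a)
    have heqj : (fun j => z (φ j) b - z (φ j) a) = fun j => ∫ s in a..b, g (φ j) s :=
      funext fun j => hint_z (φ j) a b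
    rw [heqj] at hlhs
    exact tendsto_nhds_unique hlhs hconv
  have h0 : ∀ b, Y b = Y 0 + ∫ s in (0:ℝ)..b, g0 s := by
    intro b
    have := hYint 0 b
    rw [← this]
    abel
  have hYcont : Continuous Y := by
    have hc : Continuous fun b => Y 0 + ∫ s in (0:ℝ)..b, g0 s :=
      continuous_const.add (intervalIntegral.continuous_primitive hg0int 0)
    exact hc.congr fun b => (h0 b).symm
  have hg0cont : Continuous g0 :=
    ((hGcont.comp (continuous_id.prodMk hYcont)).sub (hYcont.const_smul ((2 * π * lam0 : ℝ)))).const_smul Complex.I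
  have hYderiv : ∀ t, HasDerivAt Y (g0 t) t := by
    intro t
    have h1 : HasDerivAt (fun b => ∫ s in (0:ℝ)..b, g0 s) (g0 t) t :=
      intervalIntegral.integral_hasDerivAt_right (hg0int 0 t)
        (hg0cont.stronglyMeasurableAtFilter _ _) hg0cont.continuousAt
    have h2 := h1.const_add (Y 0)
    exact h2.congr_of_eventuallyEq (Filter.Eventually.of_forall h0)
  have hY0 : ∀ t, Y t = 0 :=
    hlam0 Y (fun t => (hYderiv t).differentiableAt) hYper (fun t => (hYderiv t).deriv)
  -- `flim` vanishes identically
  have hf0 : ∀ x : IccX, flim x = 0 := by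
    intro x
    rcases lt_or_eq_of_le x.2.2 with hx1 | hx1
    · have hfx : Int.fract (x : ℝ) = (x : ℝ) := Int.fract_eq_self.mpr ⟨x.2.1, hx1⟩
      have h := hY0 (x : ℝ)
      simp only [Y] at h
      rwa [show (⟨Int.fract (x:ℝ), hfr _⟩ : IccX) = x from Subtype.ext hfx] at h
    · have h01 : (0:ℝ) ∈ Set.Icc (0:ℝ) 1 := by norm_num
      have hx0 : ∀ j, F (φ j) x = F (φ j) ⟨0, h01⟩ := by
        intro j
        show z (φ j) (x : ℝ) = z (φ j) 0
        rw [hx1]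
        have := hzper (φ j) 0
        rw [zero_add] at this
        exact this
      have e1 : Filter.Tendsto (fun j => F (φ j) ⟨0, h01⟩) Filter.atTop
          (nhds (flim x)) := (heval x).congr hx0
      have e0 := heval ⟨0, h01⟩
      have hxeq : flim x = flim ⟨0, h01⟩ := tendsto_nhds_unique e1 e0
      have hY0' : flim ⟨0, h01⟩ = 0 := by
        have h := hY0 0
        simp only [Y] at h
        rwa [show (⟨Int.fract (0:ℝ), hfr 0⟩ : IccX) = ⟨0, h01⟩ from
          Subtype.ext Int.fract_zero] at h
      rw [hxeq, hY0']
  -- contradiction: the normalized solutions have norm `1` somewhere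
  have hdist0 : Filter.Tendsto (fun j => dist (F (φ j)) flim) Filter.atTop (nhds 0) := by
    have := hφtend.dist (tendsto_const_nhds (x := flim))
    simpa using this
  obtain ⟨j, hj⟩ := (hdist0.eventually (gt_mem_nhds (by norm_num : (0:ℝ) < 1/2))).exists
  set x : IccX := ⟨σ (φ j), hσmem (φ j)⟩ with hx
  have h1 : ‖F (φ j) x‖ = 1 := by
    show ‖z (φ j) (σ (φ j))‖ = 1
    simp only [z]
    rw [norm_smul, norm_inv, Real.norm_eq_abs, abs_of_pos (hMpos _)]
    exact inv_mul_cancel₀ (hMpos (φ j)).ne'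
  have h2 : dist (F (φ j) x) (flim x) ≤ dist (F (φ j)) flim :=
    ContinuousMap.dist_apply_le_dist x
  rw [hf0 x, dist_zero_right, h1] at h2
  linarith [h2.trans_lt hj]
end
end
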